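/- arXiv:1503.02482 — 2 statements merged into one kernel-verified Lean document; each statement's English description precedes it below -/
import Mathlib

section
/- Let n ≥ 4 and let B_n be the braid group with its classical Garside structure. For every nonzero integer k, the element Δ^k is a product of three absorbable elements; explicitly, for k ≥ 1, Δ^k = A·B·C with A = σ₁^k, B = σ₃^k, C = A⁻¹B⁻¹Δ^k, and all three of A, B, C are absorbable, and consequently Δ^{−k} = C⁻¹B⁻¹A⁻¹ is also a product of three absorbable elements. -/
/-- A Garside group of finite type: a group `G` (the group of fractions of its positive
monoid `P`), with a Garside element `Δ`, together with the associated data (left gcds,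
infimum, supremum, distinguished coset representatives) satisfying the Garside axioms.
Here `u ≼ v` (prefix order) is encoded by `u⁻¹ * v ∈ P` and `u` being a suffix of `v`
by `v * u⁻¹ ∈ P`. -/
structure GarsideGroup (G : Type*) [Group G] where
  /-- the positive monoid, viewed inside its group of fractions -/
  P : Submonoid G
  /-- the Garside element -/
  Δ : G
  delta_pos : Δ ∈ P
  /-- `G` is the group of fractions of `P` -/
  fractions : ∀ x : G, ∃ p ∈ P, ∃ q ∈ P, x = p⁻¹ * q
  /-- atomicity: the lengths of decompositions of a positive element into nontrivial
  positive factors are bounded -/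
  atomic : ∀ p ∈ P, ∃ N : ℕ,
    ∀ l : List G, (∀ a ∈ l, a ∈ P ∧ a ≠ 1) → l.prod = p → l.length ≤ N
  /-- left gcds for the prefix order -/
  lgcd : G → G → G
  lgcd_dvd_left : ∀ a b : G, (lgcd a b)⁻¹ * a ∈ P
  lgcd_dvd_right : ∀ a b : G, (lgcd a b)⁻¹ * b ∈ P
  lgcd_greatest : ∀ a b c : G, c⁻¹ * a ∈ P → c⁻¹ * b ∈ P → c⁻¹ * lgcd a b ∈ P
  /-- left lcms exist -/
  llcm_exists : ∀ a b : G, ∃ m : G, a⁻¹ * m ∈ P ∧ b⁻¹ * m ∈ P ∧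
    ∀ c : G, a⁻¹ * c ∈ P → b⁻¹ * c ∈ P → m⁻¹ * c ∈ P
  /-- right gcds exist -/
  rgcd_exists : ∀ a b : G, ∃ d : G, a * d⁻¹ ∈ P ∧ b * d⁻¹ ∈ P ∧
    ∀ c : G, a * c⁻¹ ∈ P → b * c⁻¹ ∈ P → d * c⁻¹ ∈ P
  /-- right lcms exist -/
  rlcm_exists : ∀ a b : G, ∃ m : G, m * a⁻¹ ∈ P ∧ m * b⁻¹ ∈ P ∧
    ∀ c : G, c * a⁻¹ ∈ P → c * b⁻¹ ∈ P → c * m⁻¹ ∈ P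
  /-- the left divisors of `Δ` coincide with its right divisors (the simple elements) -/
  simples_symm : ∀ s : G, (s ∈ P ∧ s⁻¹ * Δ ∈ P) ↔ (s ∈ P ∧ Δ * s⁻¹ ∈ P)
  /-- finite type: there are only finitely many simple elements -/
  simples_finite : {s : G | s ∈ P ∧ s⁻¹ * Δ ∈ P}.Finite
  /-- the simple elements generate `P` -/
  simples_generate : ∀ p ∈ P, p ∈ Submonoid.closure {s : G | s ∈ P ∧ s⁻¹ * Δ ∈ P}
  /-- the infimum: `ginf x = max { r : ℤ | Δ^r ≼ x }` -/
  ginf : G → ℤ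
  ginf_dvd : ∀ x : G, (Δ ^ ginf x)⁻¹ * x ∈ P
  ginf_max : ∀ (x : G) (r : ℤ), (Δ ^ r)⁻¹ * x ∈ P → r ≤ ginf x
  /-- the supremum: `gsup x = min { s : ℤ | x ≼ Δ^s }` -/
  gsup : G → ℤ
  gsup_dvd : ∀ x : G, x⁻¹ * Δ ^ gsup x ∈ P
  gsup_min : ∀ (x : G) (s : ℤ), x⁻¹ * Δ ^ s ∈ P → gsup x ≤ s
  /-- each coset `gΔ^ℤ` has a unique distinguished representative, of infimum `0` -/
  rep : G ⧸ Subgroup.zpowers Δ → G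
  rep_mem : ∀ v : G ⧸ Subgroup.zpowers Δ,
    (QuotientGroup.mk (rep v) : G ⧸ Subgroup.zpowers Δ) = v
  rep_inf : ∀ v : G ⧸ Subgroup.zpowers Δ, ginf (rep v) = 0
  rep_eq : ∀ x : G, ginf x = 0 → rep (QuotientGroup.mk x) = x

namespace GarsideGroup

variable {G : Type*} [Group G]

/-- the prefix order: `u ≼ v` -/
def LDvd (g : GarsideGroup G) (u v : G) : Prop := u⁻¹ * v ∈ g.P

/-- the suffix order: `u` is a suffix of `v` -/
def RDvd (g : GarsideGroup G) (u v : G) : Prop := v * u⁻¹ ∈ g.P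

/-- simple elements: positive left divisors of `Δ` -/
def Simple (g : GarsideGroup G) (s : G) : Prop := s ∈ g.P ∧ g.LDvd s g.Δ

/-- atoms of the positive monoid -/
def Atom (g : GarsideGroup G) (a : G) : Prop :=
  a ∈ g.P ∧ a ≠ 1 ∧ ∀ u v : G, u ∈ g.P → v ∈ g.P → a = u * v → u = 1 ∨ v = 1

/-- the canonical length `ℓ(x) = sup(x) - inf(x)` -/
def ell (g : GarsideGroup G) (x : G) : ℤ := g.gsup x - g.ginf x

/-- the (powers of the) inner automorphism `τ(x) = Δ⁻¹ x Δ`: `tau k x = Δ^{-k} x Δ^k` -/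
def tau (g : GarsideGroup G) (k : ℤ) (x : G) : G := g.Δ ^ (-k) * x * g.Δ ^ k

/-- the right complement `∂y = y⁻¹ Δ^{sup y}` -/
def comp (g : GarsideGroup G) (y : G) : G := y⁻¹ * g.Δ ^ g.gsup y

/-- `x` absorbs `y` -/
def Absorbs (g : GarsideGroup G) (x y : G) : Prop :=
  g.ginf (x * y) = g.ginf x ∧ g.gsup (x * y) = g.gsup x

/-- absorbable elements -/
def Absorbable (g : GarsideGroup G) (y : G) : Prop :=
  (g.ginf y = 0 ∨ g.gsup y = 0) ∧ ∃ x : G, g.Absorbs x y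

end GarsideGroup
namespace GarsideGroup

variable {G : Type*} [Group G]

/-- the vertex set of the additional length complex: cosets `gΔ^ℤ` -/
abbrev Vertex (g : GarsideGroup G) : Type _ := G ⧸ Subgroup.zpowers g.Δ

/-- the vertex represented by a group element -/
def vtx (g : GarsideGroup G) (a : G) : Vertex g := QuotientGroup.mk a

/-- there is an edge from `v` to `w` labelled by a non-trivial, non-`Δ` simple element,
or by an absorbable element -/
def Step (g : GarsideGroup G) (v w : Vertex g) : Prop :=
  (∃ m : G, g.Simple m ∧ m ≠ 1 ∧ m ≠ g.Δ ∧ g.vtx (g.rep v * m) = w) ∨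
  (∃ y : G, g.Absorbable y ∧ g.vtx (g.rep v * y) = w)

/-- the additional length complex `C_AL(G)`, as a graph on `G/⟨Δ⟩` -/
def calGraph (g : GarsideGroup G) : SimpleGraph (Vertex g) where
  Adj v w := v ≠ w ∧ (g.Step v w ∨ g.Step w v)
  symm := ⟨fun _ _ h => ⟨h.1.symm, h.2.symm⟩⟩
  loopless := ⟨fun _ h => h.1 rfl⟩

/-- the additional length metric `d_AL`: the graph distance on `C_AL(G)` (each edge
having length `1`) -/
noncomputable def dAL (g : GarsideGroup G) (v w : Vertex g) : ℕ := (g.calGraph).dist v w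

/-- `l` is a left normal form (of the element `l.prod`, of infimum `0`): all factors are
simple, different from `1` and `Δ`, and each consecutive pair is left-weighted, i.e.
`l[i] = Δ ∧ (l[i] ⋯ l[r])` for all `i`. -/
def IsLNF (g : GarsideGroup G) (l : List G) : Prop :=
  (∀ s ∈ l, g.Simple s ∧ s ≠ 1 ∧ s ≠ g.Δ) ∧
  ∀ (i : ℕ) (h : i < l.length), ∀ c : G,
    g.LDvd c g.Δ → g.LDvd c (l.drop i).prod → g.LDvd c (l.get ⟨i, h⟩)

/-- `l` is a right normal form: all factors are simple, different from `1` and `Δ`, and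
`l[i] = (l[0] ⋯ l[i]) ∧↰ Δ` (right gcd) for all `i`. -/
def IsRNF (g : GarsideGroup G) (l : List G) : Prop :=
  (∀ s ∈ l, g.Simple s ∧ s ≠ 1 ∧ s ≠ g.Δ) ∧
  ∀ (i : ℕ) (h : i < l.length), ∀ c : G,
    g.RDvd c g.Δ → g.RDvd c (l.take (i + 1)).prod → g.RDvd c (l.get ⟨i, h⟩)

/-- the distinguished representative of the coset `(v̄⁻¹w̄)Δ^ℤ` -/
def relRep (g : GarsideGroup G) (v w : Vertex g) : G :=
  g.rep (g.vtx ((g.rep v)⁻¹ * g.rep w))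

/-- the vertices visited by the edge-path starting at `v` whose edges are labelled by
the entries of `l` -/
def pathVertices (g : GarsideGroup G) (v : Vertex g) (l : List G) : List (Vertex g) :=
  (List.range (l.length + 1)).map fun i => g.vtx (g.rep v * (l.take i).prod)

/-- `l` is the list of labels of the preferred path `A(v,w)`: the left normal form of the
distinguished representative of `(v̄⁻¹w̄)Δ^ℤ`.  The vertices visited by `A(v,w)` are then
`g.pathVertices v l`. -/
def IsPrefPath (g : GarsideGroup G) (v w : Vertex g) (l : List G) : Prop :=
  g.IsLNF l ∧ l.prod = g.relRep v w

end GarsideGroup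
section Braid

open FreeGroup in
/-- the braid relations on `n - 1` generators `σ₁, …, σ_{n-1}` (indexed by `Fin (n-1)`):
`σᵢσⱼσᵢ = σⱼσᵢσⱼ` for `|i - j| = 1` and `σᵢσⱼ = σⱼσᵢ` for `|i - j| ≥ 2` -/
def braidRels (n : ℕ) : Set (FreeGroup (Fin (n - 1))) :=
  {r | ∃ i j : Fin (n - 1),
    ((i : ℕ) + 1 = (j : ℕ) ∧ r = of i * of j * of i * (of j * of i * of j)⁻¹) ∨
    ((i : ℕ) + 2 ≤ (j : ℕ) ∧ r = of i * of j * (of j * of i)⁻¹)}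

/-- the braid group `B_n` on `n` strands -/
abbrev BraidGroup (n : ℕ) := PresentedGroup (braidRels n)

/-- the Artin generator `σ_i` of `B_n`, for `1 ≤ i ≤ n - 1` (junk value `1` otherwise) -/
def braidGen (n i : ℕ) : BraidGroup n :=
  if h : 1 ≤ i ∧ i ≤ n - 1 then PresentedGroup.of ⟨i - 1, by omega⟩ else 1

/-- the half twist `Δ = (σ₁)(σ₂σ₁)⋯(σ_{n−1}⋯σ₁)` -/
def braidDelta (n : ℕ) : BraidGroup n :=
  ((List.range (n - 1)).map fun k =>
    ((List.range (k + 1)).map fun j => braidGen n (k + 1 - j)).prod).prod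

/-- the positive braid monoid `B_n⁺`, as the submonoid of `B_n` generated by the `σ_i` -/
def braidMonoid (n : ℕ) : Submonoid (BraidGroup n) :=
  Submonoid.closure {x | ∃ i : ℕ, 1 ≤ i ∧ i ≤ n - 1 ∧ x = braidGen n i}

/-- a Garside structure on `B_n` is the classical one when its positive monoid is the
positive braid monoid and its Garside element is the half twist `Δ` -/
def IsClassicalBraidStructure {n : ℕ} (g : GarsideGroup (BraidGroup n)) : Prop :=
  g.P = braidMonoid n ∧ g.Δ = braidDelta n

end Braid

open Multiplicative Equiv

abbrev BV : Type := ℕ × ℕ → Multiplicative ℤ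

def permMulAut (π : Equiv.Perm ℕ) : MulAut BV where
  toFun f := fun c => f (π.symm c.1, π.symm c.2)
  invFun f := fun c => f (π c.1, π c.2)
  left_inv f := by funext c; simp
  right_inv f := by funext c; simp
  map_mul' f h := rfl

def permHom : Equiv.Perm ℕ →* MulAut BV where
  toFun := permMulAut
  map_one' := by ext f c; rfl
  map_mul' π σ := by ext f c; simp [permMulAut, Equiv.Perm.mul_def, Equiv.symm_trans_apply]

abbrev BG2 : Type := BV ⋊[permHom] Equiv.Perm ℕ

def chi2 (i j : ℕ) : BV := fun c =>
  Multiplicative.ofAdd (if (c.1 = i ∧ c.2 = j) ∨ (c.1 = j ∧ c.2 = i) then (1:ℤ) else 0)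

def gimg (i : ℕ) : BG2 := ⟨chi2 i (i+1), Equiv.swap i (i+1)⟩

lemma act_chi2 (π : Equiv.Perm ℕ) (i j : ℕ) :
    permHom π (chi2 i j) = chi2 (π i) (π j) := by
  funext c
  show chi2 i j (π.symm c.1, π.symm c.2) = _
  unfold chi2
  congr 1
  have h1 : π.symm c.1 = i ↔ c.1 = π i := by
    rw [Equiv.symm_apply_eq]
  have h2 : π.symm c.2 = j ↔ c.2 = π j := by rw [Equiv.symm_apply_eq]
  have h3 : π.symm c.1 = j ↔ c.1 = π j := by rw [Equiv.symm_apply_eq]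
  have h4 : π.symm c.2 = i ↔ c.2 = π i := by rw [Equiv.symm_apply_eq]
  simp only [h1, h2, h3, h4]

lemma gimg_left (i : ℕ) : (gimg i).left = chi2 i (i+1) := rfl
lemma gimg_right (i : ℕ) : (gimg i).right = Equiv.swap i (i+1) := rfl

lemma mul3_left (g1 g2 g3 : BG2) :
    (g1 * g2 * g3).left = g1.left * permHom g1.right g2.left
      * permHom g1.right (permHom g2.right g3.left) := by
  simp [SemidirectProduct.mul_left, SemidirectProduct.mul_right, mul_assoc, map_mul]

lemma swap_apply_far {i j x : ℕ} (h1 : x ≠ i) (h2 : x ≠ j) : Equiv.swap i j x = x :=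
  Equiv.swap_apply_of_ne_of_ne h1 h2

lemma swap_a2 (a : ℕ) : Equiv.swap a (a+1) (a+2) = a+2 := swap_apply_far (by omega) (by omega)
lemma swap_b0 (a : ℕ) : Equiv.swap (a+1) (a+2) a = a := swap_apply_far (by omega) (by omega)

lemma gimg_braid (a : ℕ) :
    gimg a * gimg (a+1) * gimg a = gimg (a+1) * gimg a * gimg (a+1) := by
  refine SemidirectProduct.ext ?_ ?_
  · rw [mul3_left, mul3_left]
    simp only [gimg_left, gimg_right, act_chi2, show a+1+1 = a+2 from rfl,
      Equiv.swap_apply_left, Equiv.swap_apply_right, swap_a2, swap_b0]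
    simp [mul_comm, mul_left_comm]
  · show _ * _ * _ = _ * _ * (_ : Perm ℕ)
    simp only [SemidirectProduct.mul_right, gimg_right, show a+1+1 = a+2 from rfl]
    have L := Equiv.swap_mul_swap_mul_swap (x := a+2) (y := a+1) (z := a) (by omega) (by omega)
    have R := Equiv.swap_mul_swap_mul_swap (x := a) (y := a+1) (z := a+2) (by omega) (by omega)
    rw [Equiv.swap_comm (a+1) a, Equiv.swap_comm (a+2) (a+1)] at L
    rw [L, R, Equiv.swap_comm]

lemma gimg_comm (a b : ℕ) (h : a + 2 ≤ b) :
    gimg a * gimg b = gimg b * gimg a := by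
  have hba : Equiv.swap b (b+1) a = a := swap_apply_far (by omega) (by omega)
  have hba1 : Equiv.swap b (b+1) (a+1) = a+1 := swap_apply_far (by omega) (by omega)
  have hab : Equiv.swap a (a+1) b = b := swap_apply_far (by omega) (by omega)
  have hab1 : Equiv.swap a (a+1) (b+1) = b+1 := swap_apply_far (by omega) (by omega)
  refine SemidirectProduct.ext ?_ ?_
  · simp only [SemidirectProduct.mul_left, gimg_left, gimg_right, act_chi2,
      hba, hba1, hab, hab1]
    exact mul_comm _ _
  · simp only [SemidirectProduct.mul_right, gimg_right]
    ext x
    simp only [Equiv.Perm.mul_apply, Equiv.swap_apply_def]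
    split_ifs <;> omega

section Braid2

lemma braidRels_check (n : ℕ) :
    ∀ r ∈ braidRels n, FreeGroup.lift (fun i : Fin (n-1) => gimg (i : ℕ)) r = 1 := by
  rintro r ⟨i, j, ⟨hij, rfl⟩ | ⟨hij, rfl⟩⟩
  · simp only [map_mul, map_inv, FreeGroup.lift_apply_of, mul_inv_eq_one]
    rw [← hij]
    exact gimg_braid _
  · simp only [map_mul, map_inv, FreeGroup.lift_apply_of, mul_inv_eq_one]
    rcases Nat.exists_eq_add_of_le hij with ⟨m, hm⟩
    rw [hm]
    exact gimg_comm _ _ (by omega)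

def psiHom (n : ℕ) : BraidGroup n →* BG2 :=
  PresentedGroup.toGroup (braidRels_check n)

lemma psiHom_gen (n i : ℕ) (h1 : 1 ≤ i) (h2 : i ≤ n - 1) :
    psiHom n (braidGen n i) = gimg (i - 1) := by
  rw [braidGen, dif_pos ⟨h1, h2⟩]
  exact PresentedGroup.toGroup.of _

end Braid2

section Vec

variable (n : ℕ)

def vec (x : BraidGroup n) (c : ℕ × ℕ) : ℤ := Multiplicative.toAdd ((psiHom n x).left c)

def per (x : BraidGroup n) : Equiv.Perm ℕ := (psiHom n x).right

lemma vec_mul (x y : BraidGroup n) (c : ℕ × ℕ) :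
    vec n (x*y) c = vec n x c + vec n y ((per n x).symm c.1, (per n x).symm c.2) := by
  unfold vec per
  rw [map_mul, SemidirectProduct.mul_left, Pi.mul_apply, toAdd_mul]
  rfl

lemma vec_mul' (x y : BraidGroup n) (a b : ℕ) :
    vec n (x*y) (a, b) = vec n x (a, b) + vec n y ((per n x).symm a, (per n x).symm b) :=
  vec_mul n x y (a, b)

lemma per_mul (x y : BraidGroup n) : per n (x*y) = per n x * per n y := by
  unfold per; rw [map_mul]; rfl

lemma vec_nonneg {p : BraidGroup n} (hp : p ∈ braidMonoid n) (c : ℕ × ℕ) :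
    0 ≤ vec n p c := by
  induction hp using Submonoid.closure_induction generalizing c with
  | mem x hx =>
    obtain ⟨i, h1, h2, rfl⟩ := hx
    rw [show vec n (braidGen n i) c = Multiplicative.toAdd ((gimg (i-1)).left c) by
      unfold vec; rw [psiHom_gen n i h1 h2]]
    show (0:ℤ) ≤ Multiplicative.toAdd (chi2 (i-1) (i-1+1) c)
    unfold chi2
    rw [toAdd_ofAdd]
    split_ifs <;> omega
  | one =>
    have : vec n 1 c = 0 := by
      unfold vec; rw [map_one, SemidirectProduct.one_left]; rfl
    omega
  | mul x y hx hy ihx ihy =>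
    rw [vec_mul]
    exact add_nonneg (ihx _) (ihy _)

lemma permHom_pow_fix (v : BV) (π : Equiv.Perm ℕ) (h : permHom π v = v) (k : ℕ) :
    permHom (π ^ k) v = v := by
  induction k with
  | zero => simp
  | succ k ih =>
    rw [pow_succ, map_mul]
    show permHom (π ^ k) (permHom π v) = v
    rw [h, ih]

lemma mk_pow (v : BV) (π : Equiv.Perm ℕ) (h : permHom π v = v) (k : ℕ) :
    (⟨v, π⟩ : BG2) ^ k = ⟨v ^ k, π ^ k⟩ := by
  induction k with
  | zero => exact SemidirectProduct.ext (by rw [pow_zero, pow_zero]; rfl) (by rw [pow_zero, pow_zero]; rfl)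
  | succ k ih =>
    rw [pow_succ, pow_succ, pow_succ, ih]
    refine SemidirectProduct.ext ?_ rfl
    show v ^ k * permHom (π ^ k) v = v ^ k * v
    rw [permHom_pow_fix v π h k]

lemma chi2_comm (i j : ℕ) : chi2 i j = chi2 j i := by
  funext c; unfold chi2; congr 1; exact if_congr or_comm rfl rfl

end Vec

section Pows
variable (n : ℕ)

lemma toAdd_pow_apply (f : BV) (k : ℕ) (c : ℕ × ℕ) :
    Multiplicative.toAdd ((f ^ k) c) = k * Multiplicative.toAdd (f c) := by
  rw [Pi.pow_apply, toAdd_pow, nsmul_eq_mul]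

lemma psi_s1 (hn : 4 ≤ n) : psiHom n (braidGen n 1) = gimg 0 :=
  psiHom_gen n 1 le_rfl (by omega)

lemma psi_s3 (hn : 4 ≤ n) : psiHom n (braidGen n 3) = gimg 2 :=
  psiHom_gen n 3 (by omega) (by omega)

lemma act_fix_01 : permHom (Equiv.swap 0 1) (chi2 0 1) = chi2 0 1 := by
  rw [act_chi2, Equiv.swap_apply_left, Equiv.swap_apply_right]
  exact (chi2_comm 0 1).symm

lemma act_fix_23 : permHom (Equiv.swap 2 3) (chi2 2 3) = chi2 2 3 := by
  rw [act_chi2, Equiv.swap_apply_left, Equiv.swap_apply_right]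
  exact (chi2_comm 2 3).symm

lemma psi_s1_pow (hn : 4 ≤ n) (k : ℕ) :
    psiHom n (braidGen n 1 ^ k) = ⟨chi2 0 1 ^ k, (Equiv.swap 0 1) ^ k⟩ := by
  rw [map_pow, psi_s1 n hn]
  exact mk_pow _ _ act_fix_01 k

lemma psi_s3_pow (hn : 4 ≤ n) (k : ℕ) :
    psiHom n (braidGen n 3 ^ k) = ⟨chi2 2 3 ^ k, (Equiv.swap 2 3) ^ k⟩ := by
  rw [map_pow, psi_s3 n hn]
  exact mk_pow _ _ act_fix_23 k

lemma swap23_01_vals : (Equiv.swap 2 3 * Equiv.swap 0 1 : Equiv.Perm ℕ) 2 = 3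
    ∧ (Equiv.swap 2 3 * Equiv.swap 0 1 : Equiv.Perm ℕ) 3 = 2
    ∧ (Equiv.swap 2 3 * Equiv.swap 0 1 : Equiv.Perm ℕ) 0 = 1
    ∧ (Equiv.swap 2 3 * Equiv.swap 0 1 : Equiv.Perm ℕ) 1 = 0 := by
  refine ⟨?_, ?_, ?_, ?_⟩ <;>
    simp [Equiv.Perm.mul_apply, Equiv.swap_apply_def]

lemma act_fix_ba : permHom (Equiv.swap 2 3 * Equiv.swap 0 1) (chi2 2 3 * chi2 0 1)
    = chi2 2 3 * chi2 0 1 := by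
  rw [map_mul, act_chi2, act_chi2, swap23_01_vals.1, swap23_01_vals.2.1,
    swap23_01_vals.2.2.1, swap23_01_vals.2.2.2]
  rw [chi2_comm 3 2, chi2_comm 1 0]

lemma psi_ba_pow (hn : 4 ≤ n) (k : ℕ) :
    psiHom n ((braidGen n 3 * braidGen n 1) ^ k)
      = ⟨(chi2 2 3 * chi2 0 1) ^ k, (Equiv.swap 2 3 * Equiv.swap 0 1) ^ k⟩ := by
  rw [map_pow, map_mul, psi_s1 n hn, psi_s3 n hn]
  have : (gimg 2 * gimg 0 : BG2) = ⟨chi2 2 3 * chi2 0 1, Equiv.swap 2 3 * Equiv.swap 0 1⟩ := by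
    refine SemidirectProduct.ext ?_ rfl
    show chi2 2 3 * permHom (Equiv.swap 2 3) (chi2 0 1) = chi2 2 3 * chi2 0 1
    rw [act_chi2]
    norm_num [Equiv.swap_apply_def]
  rw [this]
  exact mk_pow _ _ act_fix_ba k

lemma chi2_apply (i j x y : ℕ) :
    Multiplicative.toAdd (chi2 i j (x, y)) = if (x = i ∧ y = j) ∨ (x = j ∧ y = i) then 1 else 0 := rfl

lemma vec_s1_pow (hn : 4 ≤ n) (k : ℕ) :
    vec n (braidGen n 1 ^ k) (0,1) = k ∧ vec n (braidGen n 1 ^ k) (0,2) = 0 := by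
  unfold vec
  rw [psi_s1_pow n hn]
  constructor <;>
  · show Multiplicative.toAdd ((chi2 0 1 ^ k) _) = _
    rw [toAdd_pow_apply, chi2_apply]
    norm_num

lemma vec_s3_pow (hn : 4 ≤ n) (k : ℕ) :
    vec n (braidGen n 3 ^ k) (2,3) = k ∧ vec n (braidGen n 3 ^ k) (0,2) = 0 := by
  unfold vec
  rw [psi_s3_pow n hn]
  constructor <;>
  · show Multiplicative.toAdd ((chi2 2 3 ^ k) _) = _
    rw [toAdd_pow_apply, chi2_apply]
    norm_num

lemma vec_ba_pow (hn : 4 ≤ n) (k : ℕ) :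
    vec n ((braidGen n 3 * braidGen n 1) ^ k) (0,1) = k
      ∧ vec n ((braidGen n 3 * braidGen n 1) ^ k) (0,2) = 0 := by
  unfold vec
  rw [psi_ba_pow n hn]
  constructor <;>
  · show Multiplicative.toAdd (((chi2 2 3 * chi2 0 1) ^ k) _) = _
    rw [toAdd_pow_apply, Pi.mul_apply, toAdd_mul, chi2_apply, chi2_apply]
    norm_num

end Pows

section DeltaComp
variable (n : ℕ)

def rowP (m : ℕ) : BraidGroup n := ((List.range (m+1)).map fun j => braidGen n (m+1-j)).prod
def pdP (m : ℕ) : BraidGroup n := ((List.range m).map fun k => rowP n k).prod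

lemma braidDelta_eq : braidDelta n = pdP n (n-1) := rfl

lemma rowP_zero : rowP n 0 = braidGen n 1 := by
  simp [rowP, List.range_succ]

lemma rowP_succ (m : ℕ) : rowP n (m+1) = braidGen n (m+2) * rowP n m := by
  unfold rowP
  rw [List.range_succ_eq_map, List.map_cons, List.prod_cons, List.map_map]
  congr 2
  apply List.map_congr_left
  intro j hj
  simp only [Function.comp_apply]
  congr 1
  omega

lemma pdP_succ (m : ℕ) : pdP n (m+1) = pdP n m * rowP n m := by
  unfold pdP
  rw [List.range_succ, List.map_append, List.prod_append, List.map_singleton,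
    List.prod_singleton]

lemma vec_one (c : ℕ × ℕ) : vec n 1 c = 0 := by
  unfold vec; rw [map_one, SemidirectProduct.one_left]; rfl

lemma per_one (x : ℕ) : per n 1 x = x := by
  unfold per; rw [map_one]; rfl

lemma per_gen (i : ℕ) (h1 : 1 ≤ i) (h2 : i ≤ n - 1) (x : ℕ) :
    per n (braidGen n i) x = Equiv.swap (i-1) i x := by
  unfold per
  rw [psiHom_gen n i h1 h2]
  have : i - 1 + 1 = i := by omega
  rw [gimg_right, this]

lemma vec_gen (i : ℕ) (h1 : 1 ≤ i) (h2 : i ≤ n - 1) (x y : ℕ) :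
    vec n (braidGen n i) (x, y) = if (x = i-1 ∧ y = i) ∨ (x = i ∧ y = i-1) then 1 else 0 := by
  unfold vec
  rw [psiHom_gen n i h1 h2]
  show Multiplicative.toAdd (chi2 (i-1) (i-1+1) (x,y)) = _
  rw [chi2_apply]
  have : i - 1 + 1 = i := by omega
  rw [this]

lemma row_right (m : ℕ) (hm : m + 1 ≤ n - 1) (x : ℕ) :
    per n (rowP n m) x = if x = 0 then m+1 else if x ≤ m+1 then x-1 else x := by
  induction m with
  | zero =>
    rw [rowP_zero, per_gen n 1 le_rfl (by omega)]
    simp only [Equiv.swap_apply_def]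
    split_ifs <;> omega
  | succ m ih =>
    rw [rowP_succ, per_mul]
    show per n (braidGen n (m+2)) (per n (rowP n m) x) = _
    rw [ih (by omega), per_gen n (m+2) (by omega) (by omega)]
    simp only [Equiv.swap_apply_def]
    split_ifs <;> omega

lemma row_left (m : ℕ) (hm : m + 1 ≤ n - 1) (x y : ℕ) :
    vec n (rowP n m) (x, y)
      = if (x ≤ m ∧ y = m+1) ∨ (y ≤ m ∧ x = m+1) then 1 else 0 := by
  induction m generalizing x y with
  | zero =>
    rw [rowP_zero, vec_gen n 1 le_rfl (by omega)]
    split_ifs <;> omega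
  | succ m ih =>
    rw [rowP_succ, vec_mul']
    have hper : ∀ z, (per n (braidGen n (m+2))).symm z = Equiv.swap (m+1) (m+2) z := by
      intro z
      rw [Equiv.symm_apply_eq]
      rw [per_gen n (m+2) (by omega) (by omega)]
      have : m + 2 - 1 = m + 1 := by omega
      rw [this, Equiv.swap_apply_def, Equiv.swap_apply_def]
      split_ifs <;> omega
    rw [vec_gen n (m+2) (by omega) (by omega), hper, hper,
      ih (by omega)]
    have h2 : m + 2 - 1 = m + 1 := by omega
    rw [h2]
    simp only [Equiv.swap_apply_def]
    split_ifs <;> omega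

lemma pd_right (m : ℕ) (hm : m ≤ n - 1) (x : ℕ) :
    per n (pdP n m) x = if x ≤ m then m - x else x := by
  induction m generalizing x with
  | zero =>
    show per n 1 x = _
    rw [per_one]
    split_ifs <;> omega
  | succ m ih =>
    rw [pdP_succ, per_mul]
    show per n (pdP n m) (per n (rowP n m) x) = _
    rw [row_right n m (by omega), ih (by omega)]
    split_ifs <;> omega

lemma pd_left (m : ℕ) (hm : m ≤ n - 1) (x y : ℕ) :
    vec n (pdP n m) (x, y) = if x ≠ y ∧ x ≤ m ∧ y ≤ m then 1 else 0 := by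
  induction m with
  | zero =>
    show vec n 1 _ = _
    rw [vec_one]
    split_ifs <;> omega
  | succ m ih =>
    rw [pdP_succ, vec_mul']
    have hsymm : ∀ z, (per n (pdP n m)).symm z = if z ≤ m then m - z else z := by
      intro z
      rw [Equiv.symm_apply_eq, pd_right n m (by omega)]
      split_ifs <;> omega
    rw [hsymm, hsymm, ih (by omega), row_left n m (by omega)]
    split_ifs <;> omega

lemma vec_delta (hn : 4 ≤ n) (x y : ℕ) (hxy : x ≠ y) (hx : x ≤ n-1) (hy : y ≤ n-1) :
    vec n (braidDelta n) (x, y) = 1 := by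
  rw [braidDelta_eq, pd_left n (n-1) le_rfl]
  rw [if_pos ⟨hxy, hx, hy⟩]

lemma per_delta_symm (hn : 4 ≤ n) (z : ℕ) :
    (per n (braidDelta n)).symm z = if z ≤ n-1 then n-1-z else z := by
  rw [Equiv.symm_apply_eq, braidDelta_eq, pd_right n (n-1) le_rfl]
  split_ifs <;> omega

lemma vec_delta_pow (hn : 4 ≤ n) (m : ℕ) (x y : ℕ) (hxy : x ≠ y) (hx : x ≤ n-1) (hy : y ≤ n-1) :
    vec n (braidDelta n ^ m) (x, y) = m := by
  induction m generalizing x y with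
  | zero => rw [pow_zero, vec_one]; simp
  | succ m ih =>
    rw [pow_succ', vec_mul', per_delta_symm n hn, per_delta_symm n hn,
      vec_delta n hn x y hxy hx hy]
    have h1 : (if x ≤ n-1 then n-1-x else x) = n-1-x := if_pos hx
    have h2 : (if y ≤ n-1 then n-1-y else y) = n-1-y := if_pos hy
    rw [h1, h2, ih (n-1-x) (n-1-y) (by omega) (by omega) (by omega)]
    push_cast
    omega

end DeltaComp

section BraidIdent
variable (n : ℕ)

lemma rel_one {r : FreeGroup (Fin (n-1))} (hr : r ∈ braidRels n) :
    PresentedGroup.mk (braidRels n) r = 1 := by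
  have : r ∈ Subgroup.normalClosure (braidRels n) := Subgroup.subset_normalClosure hr
  exact (QuotientGroup.eq_one_iff r).mpr this

lemma braid_rel {i : ℕ} (h1 : 1 ≤ i) (h2 : i + 1 ≤ n - 1) :
    braidGen n i * braidGen n (i+1) * braidGen n i
      = braidGen n (i+1) * braidGen n i * braidGen n (i+1) := by
  have hI : 1 ≤ i ∧ i ≤ n - 1 := ⟨h1, by omega⟩
  have hJ : 1 ≤ i + 1 ∧ i + 1 ≤ n - 1 := ⟨by omega, h2⟩
  set I : Fin (n-1) := ⟨i - 1, by omega⟩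
  set J : Fin (n-1) := ⟨i, by omega⟩
  have hr : (FreeGroup.of I * FreeGroup.of J * FreeGroup.of I *
      (FreeGroup.of J * FreeGroup.of I * FreeGroup.of J)⁻¹) ∈ braidRels n := by
    refine ⟨I, J, Or.inl ⟨?_, rfl⟩⟩
    show i - 1 + 1 = i
    omega
  have h := rel_one n hr
  rw [map_mul, map_inv, mul_inv_eq_one] at h
  rw [braidGen, dif_pos hI, braidGen, dif_pos hJ]
  have hi1 : i + 1 - 1 = i := by omega
  simpa [PresentedGroup.of, map_mul, hi1] using h

lemma braid_comm {i j : ℕ} (h1 : 1 ≤ i) (h : i + 2 ≤ j) (h2 : j ≤ n - 1) :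
    braidGen n i * braidGen n j = braidGen n j * braidGen n i := by
  have hI : 1 ≤ i ∧ i ≤ n - 1 := ⟨h1, by omega⟩
  have hJ : 1 ≤ j ∧ j ≤ n - 1 := ⟨by omega, h2⟩
  set I : Fin (n-1) := ⟨i - 1, by omega⟩
  set J : Fin (n-1) := ⟨j - 1, by omega⟩
  have hr : (FreeGroup.of I * FreeGroup.of J *
      (FreeGroup.of J * FreeGroup.of I)⁻¹) ∈ braidRels n := by
    refine ⟨I, J, Or.inr ⟨?_, rfl⟩⟩
    show (i - 1) + 2 ≤ j - 1
    omega
  have h' := rel_one n hr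
  rw [map_mul, map_inv, mul_inv_eq_one] at h'
  rw [braidGen, dif_pos hI, braidGen, dif_pos hJ]
  simpa [PresentedGroup.of, map_mul] using h'

lemma braidGen_mem {i : ℕ} (h1 : 1 ≤ i) (h2 : i ≤ n - 1) :
    braidGen n i ∈ braidMonoid n :=
  Submonoid.subset_closure ⟨i, h1, h2, rfl⟩

lemma rowP_mem {m : ℕ} (hm : m + 1 ≤ n - 1) : rowP n m ∈ braidMonoid n := by
  induction m with
  | zero => rw [rowP_zero]; exact braidGen_mem n le_rfl (by omega)
  | succ m ih =>
    rw [rowP_succ]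
    exact mul_mem (braidGen_mem n (by omega) (by omega)) (ih (by omega))

lemma pdP_mem {m : ℕ} (hm : m ≤ n - 1) : pdP n m ∈ braidMonoid n := by
  induction m with
  | zero => exact one_mem _
  | succ m ih =>
    rw [pdP_succ]
    exact mul_mem (ih (by omega)) (rowP_mem n (by omega))

lemma pdP_three : pdP n 3 = braidGen n 1 * (braidGen n 2 * (braidGen n 1 *
    (braidGen n 3 * (braidGen n 2 * braidGen n 1)))) := by
  have h1 : rowP n 1 = braidGen n 2 * braidGen n 1 := by rw [rowP_succ, rowP_zero]
  have h2 : rowP n 2 = braidGen n 3 * (braidGen n 2 * braidGen n 1) := by rw [rowP_succ, h1]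
  show ((List.range 3).map (rowP n)).prod = _
  rw [show List.range 3 = [0, 1, 2] by rfl]
  simp only [List.map_cons, List.map_nil, List.prod_cons, List.prod_nil, mul_one]
  rw [rowP_zero, h1, h2]
  simp only [mul_assoc]

lemma pdP_split (m : ℕ) (h3 : 3 ≤ m) (hm : m ≤ n - 1) :
    ∃ R ∈ braidMonoid n, pdP n m = pdP n 3 * R := by
  induction m, h3 using Nat.le_induction with
  | base => exact ⟨1, one_mem _, (mul_one _).symm⟩
  | succ m hm3 ih =>
    obtain ⟨R, hR, hEq⟩ := ih (by omega)
    refine ⟨R * rowP n m, mul_mem hR (rowP_mem n (by omega)), ?_⟩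
    rw [pdP_succ, hEq, mul_assoc]

/-- `Δ = σ₁σ₂σ₁σ₃σ₂σ₁ ⬝ R` with `R` positive -/
lemma delta_split (hn : 4 ≤ n) : ∃ R ∈ braidMonoid n,
    braidDelta n = braidGen n 1 * (braidGen n 2 * (braidGen n 1 *
      (braidGen n 3 * (braidGen n 2 * (braidGen n 1 * R))))) := by
  obtain ⟨R, hR, hEq⟩ := pdP_split n (n-1) (by omega) le_rfl
  refine ⟨R, hR, ?_⟩
  rw [braidDelta_eq, hEq, pdP_three]
  simp only [mul_assoc]

lemma delta_s1 (hn : 4 ≤ n) : ∃ u ∈ braidMonoid n,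
    braidDelta n = braidGen n 1 * u := by
  obtain ⟨R, hR, hD⟩ := delta_split n hn
  have m1 : braidGen n 1 ∈ braidMonoid n := braidGen_mem n le_rfl (by omega)
  have m2 : braidGen n 2 ∈ braidMonoid n := braidGen_mem n (by omega) (by omega)
  have m3 : braidGen n 3 ∈ braidMonoid n := braidGen_mem n (by omega) (by omega)
  exact ⟨_, mul_mem m2 (mul_mem m1 (mul_mem m3 (mul_mem m2 (mul_mem m1 hR)))), hD⟩

lemma delta_s3s1 (hn : 4 ≤ n) : ∃ u ∈ braidMonoid n,
    braidDelta n = braidGen n 3 * (braidGen n 1 * u) := by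
  obtain ⟨R, hR, hD⟩ := delta_split n hn
  have m1 : braidGen n 1 ∈ braidMonoid n := braidGen_mem n le_rfl (by omega)
  have m2 : braidGen n 2 ∈ braidMonoid n := braidGen_mem n (by omega) (by omega)
  have m3 : braidGen n 3 ∈ braidMonoid n := braidGen_mem n (by omega) (by omega)
  have c13 : braidGen n 1 * braidGen n 3 = braidGen n 3 * braidGen n 1 :=
    braid_comm n le_rfl (by omega) (by omega)
  have r12 : braidGen n 1 * braidGen n 2 * braidGen n 1
      = braidGen n 2 * braidGen n 1 * braidGen n 2 := braid_rel n le_rfl (by omega)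
  have r23 : braidGen n 2 * braidGen n 3 * braidGen n 2
      = braidGen n 3 * braidGen n 2 * braidGen n 3 := braid_rel n (by omega) (by omega)
  have hc13 : ∀ x : BraidGroup n, braidGen n 1 * (braidGen n 3 * x)
      = braidGen n 3 * (braidGen n 1 * x) := fun x => by rw [← mul_assoc, c13, mul_assoc]
  have hr12 : ∀ x : BraidGroup n, braidGen n 1 * (braidGen n 2 * (braidGen n 1 * x))
      = braidGen n 2 * (braidGen n 1 * (braidGen n 2 * x)) := fun x => by
    rw [← mul_assoc, ← mul_assoc, r12, mul_assoc, mul_assoc]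
  have hr23 : ∀ x : BraidGroup n, braidGen n 2 * (braidGen n 3 * (braidGen n 2 * x))
      = braidGen n 3 * (braidGen n 2 * (braidGen n 3 * x)) := fun x => by
    rw [← mul_assoc, ← mul_assoc, r23, mul_assoc, mul_assoc]
  refine ⟨braidGen n 2 * (braidGen n 3 * (braidGen n 1 * (braidGen n 2 * R))),
    mul_mem m2 (mul_mem m3 (mul_mem m1 (mul_mem m2 hR))), ?_⟩
  rw [hD, hc13 (braidGen n 2 * (braidGen n 1 * R)), hr12 R,
    hr23 (braidGen n 1 * (braidGen n 2 * R)),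
    hc13 (braidGen n 2 * (braidGen n 3 * (braidGen n 1 * (braidGen n 2 * R))))]

lemma sig1_inv_delta (hn : 4 ≤ n) : (braidGen n 1)⁻¹ * braidDelta n ∈ braidMonoid n := by
  obtain ⟨u, hu, hD⟩ := delta_s1 n hn
  rw [hD, inv_mul_cancel_left]
  exact hu

lemma sig3_inv_delta (hn : 4 ≤ n) : (braidGen n 3)⁻¹ * braidDelta n ∈ braidMonoid n := by
  obtain ⟨u, hu, hD⟩ := delta_s3s1 n hn
  rw [hD, inv_mul_cancel_left]
  exact mul_mem (braidGen_mem n le_rfl (by omega)) hu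

lemma sig31_inv_delta (hn : 4 ≤ n) :
    (braidGen n 3 * braidGen n 1)⁻¹ * braidDelta n ∈ braidMonoid n := by
  obtain ⟨u, hu, hD⟩ := delta_s3s1 n hn
  rw [hD]
  have : (braidGen n 3 * braidGen n 1)⁻¹ * (braidGen n 3 * (braidGen n 1 * u)) = u := by
    group
  rw [this]
  exact hu

end BraidIdent


namespace GarsideGroup

variable {G : Type*} [Group G] (g : GarsideGroup G)

lemma delta_zpow_mem {j : ℤ} (h : 0 ≤ j) : g.Δ ^ j ∈ g.P := by
  obtain ⟨m, rfl⟩ := Int.eq_ofNat_of_zero_le h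
  rw [zpow_natCast]
  exact pow_mem g.delta_pos m

lemma tau_one {w : G} (hw : w ∈ g.P) : g.Δ⁻¹ * w * g.Δ ∈ g.P := by
  have h2 := g.simples_generate w hw
  clear hw
  induction h2 using Submonoid.closure_induction with
  | mem s hs =>
    obtain ⟨hsP, hsD⟩ := hs
    have hback : g.Δ * (s⁻¹ * g.Δ)⁻¹ ∈ g.P := by
      have : g.Δ * (s⁻¹ * g.Δ)⁻¹ = s := by group
      rw [this]; exact hsP
    have hsymm := (g.simples_symm (s⁻¹ * g.Δ)).mpr ⟨hsD, hback⟩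
    have : g.Δ⁻¹ * s * g.Δ = (s⁻¹ * g.Δ)⁻¹ * g.Δ := by group
    rw [this]
    exact hsymm.2
  | one =>
    have : g.Δ⁻¹ * 1 * g.Δ = 1 := by group
    rw [this]; exact one_mem _
  | mul x y hx hy ihx ihy =>
    have : g.Δ⁻¹ * (x * y) * g.Δ = (g.Δ⁻¹ * x * g.Δ) * (g.Δ⁻¹ * y * g.Δ) := by group
    rw [this]; exact mul_mem ihx ihy

lemma tau_inv_one {w : G} (hw : w ∈ g.P) : g.Δ * w * g.Δ⁻¹ ∈ g.P := by
  have h2 := g.simples_generate w hw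
  clear hw
  induction h2 using Submonoid.closure_induction with
  | mem s hs =>
    obtain ⟨hsP, hsD⟩ := hs
    have hu : g.Δ * s⁻¹ ∈ g.P := ((g.simples_symm s).mp ⟨hsP, hsD⟩).2
    have hu2 : (g.Δ * s⁻¹)⁻¹ * g.Δ ∈ g.P := by
      have : (g.Δ * s⁻¹)⁻¹ * g.Δ = s := by group
      rw [this]; exact hsP
    have hsymm := (g.simples_symm (g.Δ * s⁻¹)).mp ⟨hu, hu2⟩
    have : g.Δ * s * g.Δ⁻¹ = g.Δ * (g.Δ * s⁻¹)⁻¹ := by group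
    rw [this]
    exact hsymm.2
  | one =>
    have : g.Δ * 1 * g.Δ⁻¹ = 1 := by group
    rw [this]; exact one_mem _
  | mul x y hx hy ihx ihy =>
    have : g.Δ * (x * y) * g.Δ⁻¹ = (g.Δ * x * g.Δ⁻¹) * (g.Δ * y * g.Δ⁻¹) := by group
    rw [this]; exact mul_mem ihx ihy

lemma conj_mem (j : ℤ) {z : G} (hz : z ∈ g.P) : g.Δ ^ (-j) * z * g.Δ ^ j ∈ g.P := by
  induction j using Int.induction_on with
  | zero => simpa using hz
  | succ i ih =>
    have : g.Δ ^ (-((i:ℤ)+1)) * z * g.Δ ^ ((i:ℤ)+1)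
        = g.Δ⁻¹ * (g.Δ ^ (-(i:ℤ)) * z * g.Δ ^ (i:ℤ)) * g.Δ := by
      group
    rw [this]
    exact g.tau_one ih
  | pred i ih =>
    have : g.Δ ^ (-(-(i:ℤ)-1)) * z * g.Δ ^ (-(i:ℤ)-1)
        = g.Δ * (g.Δ ^ (-(-(i:ℤ))) * z * g.Δ ^ (-(i:ℤ))) * g.Δ⁻¹ := by
      group
    rw [this]
    exact g.tau_inv_one ih

lemma le_ginf_iff (r : ℤ) (x : G) : r ≤ g.ginf x ↔ (g.Δ ^ r)⁻¹ * x ∈ g.P := by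
  constructor
  · intro h
    have e : (g.Δ ^ r)⁻¹ * x = g.Δ ^ (g.ginf x - r) * ((g.Δ ^ g.ginf x)⁻¹ * x) := by
      group
    rw [e]
    exact mul_mem (g.delta_zpow_mem (by omega)) (g.ginf_dvd x)
  · exact g.ginf_max x r

lemma gsup_le_iff (s : ℤ) (x : G) : g.gsup x ≤ s ↔ x⁻¹ * g.Δ ^ s ∈ g.P := by
  constructor
  · intro h
    have e : x⁻¹ * g.Δ ^ s = (x⁻¹ * g.Δ ^ g.gsup x) * g.Δ ^ (s - g.gsup x) := by
      group
    rw [e]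
    exact mul_mem (g.gsup_dvd x) (g.delta_zpow_mem (by omega))
  · exact g.gsup_min x s

lemma ginf_inv (x : G) : g.ginf x⁻¹ = -g.gsup x := by
  refine le_antisymm ?_ ?_
  · have h1 : (g.Δ ^ g.ginf x⁻¹)⁻¹ * x⁻¹ ∈ g.P := g.ginf_dvd x⁻¹
    have h2 : x⁻¹ * g.Δ ^ (-(g.ginf x⁻¹)) ∈ g.P := by
      have e : x⁻¹ * g.Δ ^ (-(g.ginf x⁻¹))
          = g.Δ ^ (-(-(g.ginf x⁻¹))) * ((g.Δ ^ g.ginf x⁻¹)⁻¹ * x⁻¹) * g.Δ ^ (-(g.ginf x⁻¹)) := by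
        group
      rw [e]
      exact g.conj_mem _ h1
    have := (g.gsup_le_iff _ x).mpr h2
    omega
  · rw [g.le_ginf_iff]
    have e : (g.Δ ^ (-g.gsup x))⁻¹ * x⁻¹
        = g.Δ ^ (-(-g.gsup x)) * (x⁻¹ * g.Δ ^ g.gsup x) * g.Δ ^ (-g.gsup x) := by
      group
    rw [e]
    exact g.conj_mem _ (g.gsup_dvd x)

lemma gsup_inv (x : G) : g.gsup x⁻¹ = -g.ginf x := by
  have := g.ginf_inv x⁻¹
  rw [inv_inv] at this
  omega

lemma gsup_mul_le (x y : G) : g.gsup (x * y) ≤ g.gsup x + g.gsup y := by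
  rw [g.gsup_le_iff]
  have e : (x * y)⁻¹ * g.Δ ^ (g.gsup x + g.gsup y)
      = (y⁻¹ * g.Δ ^ g.gsup y) * (g.Δ ^ (-g.gsup y) * (x⁻¹ * g.Δ ^ g.gsup x) * g.Δ ^ g.gsup y) := by
    group
  rw [e]
  exact mul_mem (g.gsup_dvd y) (g.conj_mem _ (g.gsup_dvd x))

lemma le_ginf_mul (x y : G) : g.ginf x + g.ginf y ≤ g.ginf (x * y) := by
  rw [g.le_ginf_iff]
  have e : (g.Δ ^ (g.ginf x + g.ginf y))⁻¹ * (x * y)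
      = (g.Δ ^ (-g.ginf y) * ((g.Δ ^ g.ginf x)⁻¹ * x) * g.Δ ^ g.ginf y)
        * ((g.Δ ^ g.ginf y)⁻¹ * y) := by
    group
  rw [e]
  exact mul_mem (g.conj_mem _ (g.ginf_dvd x)) (g.ginf_dvd y)

lemma le_ginf_mul_zpow (x : G) (j : ℤ) : g.ginf x + j ≤ g.ginf (x * g.Δ ^ j) := by
  rw [g.le_ginf_iff]
  have e : (g.Δ ^ (g.ginf x + j))⁻¹ * (x * g.Δ ^ j)
      = g.Δ ^ (-j) * ((g.Δ ^ g.ginf x)⁻¹ * x) * g.Δ ^ j := by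
    group
  rw [e]
  exact g.conj_mem _ (g.ginf_dvd x)

lemma ginf_mul_zpow (x : G) (j : ℤ) : g.ginf (x * g.Δ ^ j) = g.ginf x + j := by
  refine le_antisymm ?_ (g.le_ginf_mul_zpow x j)
  have h := g.le_ginf_mul_zpow (x * g.Δ ^ j) (-j)
  rw [mul_assoc, ← zpow_add] at h
  simp only [add_neg_cancel, zpow_zero, mul_one] at h
  omega

lemma gsup_mul_zpow_le (x : G) (j : ℤ) : g.gsup (x * g.Δ ^ j) ≤ g.gsup x + j := by
  rw [g.gsup_le_iff]
  have e : (x * g.Δ ^ j)⁻¹ * g.Δ ^ (g.gsup x + j)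
      = g.Δ ^ (-j) * (x⁻¹ * g.Δ ^ g.gsup x) * g.Δ ^ j := by
    group
  rw [e]
  exact g.conj_mem _ (g.gsup_dvd x)

lemma gsup_mul_zpow (x : G) (j : ℤ) : g.gsup (x * g.Δ ^ j) = g.gsup x + j := by
  refine le_antisymm (g.gsup_mul_zpow_le x j) ?_
  have h := g.gsup_mul_zpow_le (x * g.Δ ^ j) (-j)
  rw [mul_assoc, ← zpow_add] at h
  simp only [add_neg_cancel, zpow_zero, mul_one] at h
  omega

lemma gsup_one_le : g.gsup 1 ≤ 0 := by
  rw [g.gsup_le_iff]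
  simpa using one_mem g.P

lemma gsup_pow_le (x : G) (h : g.gsup x ≤ 1) (k : ℕ) : g.gsup (x ^ k) ≤ k := by
  induction k with
  | zero => simpa using g.gsup_one_le
  | succ k ih =>
    calc g.gsup (x ^ (k+1)) ≤ g.gsup (x ^ k) + g.gsup x := by
          rw [pow_succ]; exact g.gsup_mul_le _ _
    _ ≤ k + 1 := by omega

end GarsideGroup


section Values

variable {n : ℕ} (g : GarsideGroup (BraidGroup n))

/-- if the `(a,b)` crossing number of `x` is `k`, then `gsup x ≥ k` -/
lemma val_sup_ge (hn : 4 ≤ n) (hgP : g.P = braidMonoid n) (hgD : g.Δ = braidDelta n)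
    (x : BraidGroup n) (k : ℕ) (hk : 1 ≤ k) (a b : ℕ) (hab : a ≠ b)
    (ha : a ≤ n-1) (hb : b ≤ n-1) (hvec : vec n x (a, b) = (k:ℤ)) :
    (k:ℤ) ≤ g.gsup x := by
  by_contra hcon
  push_neg at hcon
  have hs : g.gsup x ≤ (k:ℤ) - 1 := by omega
  have hp := (g.gsup_le_iff _ x).mp hs
  rw [hgD, hgP] at hp
  have hcast : ((k:ℤ) - 1) = ((k - 1 : ℕ) : ℤ) := by omega
  rw [hcast, zpow_natCast] at hp
  have hEq : braidDelta n ^ (k-1) = x * (x⁻¹ * braidDelta n ^ (k-1)) := by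
    rw [mul_inv_cancel_left]
  have h1 : vec n (braidDelta n ^ (k-1)) (a, b) = ((k-1 : ℕ) : ℤ) :=
    vec_delta_pow n hn (k-1) a b hab ha hb
  rw [hEq, vec_mul', hvec] at h1
  have h2 := vec_nonneg n hp
    ((per n x).symm a, (per n x).symm b)
  omega

/-- if the `(0,2)` crossing number of `x` is `0`, then `ginf x ≤ 0` -/
lemma val_inf_le (hn : 4 ≤ n) (hgP : g.P = braidMonoid n) (hgD : g.Δ = braidDelta n)
    (x : BraidGroup n) (hvec : vec n x (0, 2) = 0) : g.ginf x ≤ 0 := by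
  by_contra hcon
  push_neg at hcon
  have h1 : (1:ℤ) ≤ g.ginf x := hcon
  have hp := (g.le_ginf_iff 1 x).mp h1
  rw [hgD, hgP, zpow_one] at hp
  have hEq : x = braidDelta n * ((braidDelta n)⁻¹ * x) := by
    rw [mul_inv_cancel_left]
  have h2 : vec n (braidDelta n) (0, 2) = 1 := vec_delta n hn 0 2 (by omega) (by omega) (by omega)
  have h3 := vec_nonneg n hp ((per n (braidDelta n)).symm 0, (per n (braidDelta n)).symm 2)
  rw [hEq, vec_mul', h2] at hvec
  omega

lemma val_s1 (hn : 4 ≤ n) (hgP : g.P = braidMonoid n) (hgD : g.Δ = braidDelta n)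
    (k : ℕ) (hk : 1 ≤ k) :
    g.ginf (braidGen n 1 ^ k) = 0 ∧ g.gsup (braidGen n 1 ^ k) = (k:ℤ) := by
  have hsle : g.gsup (braidGen n 1) ≤ 1 := by
    rw [g.gsup_le_iff, hgD, hgP, zpow_one]
    exact sig1_inv_delta n hn
  constructor
  · refine le_antisymm (val_inf_le g hn hgP hgD _ (vec_s1_pow n hn k).2) ?_
    rw [g.le_ginf_iff, zpow_zero, inv_one, one_mul, hgP]
    exact pow_mem (braidGen_mem n le_rfl (by omega)) k
  · refine le_antisymm (g.gsup_pow_le _ hsle k) ?_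
    exact val_sup_ge g hn hgP hgD _ k hk 0 1 (by omega) (by omega) (by omega)
      (vec_s1_pow n hn k).1

lemma val_s3 (hn : 4 ≤ n) (hgP : g.P = braidMonoid n) (hgD : g.Δ = braidDelta n)
    (k : ℕ) (hk : 1 ≤ k) :
    g.ginf (braidGen n 3 ^ k) = 0 ∧ g.gsup (braidGen n 3 ^ k) = (k:ℤ) := by
  have hsle : g.gsup (braidGen n 3) ≤ 1 := by
    rw [g.gsup_le_iff, hgD, hgP, zpow_one]
    exact sig3_inv_delta n hn
  constructor
  · refine le_antisymm (val_inf_le g hn hgP hgD _ (vec_s3_pow n hn k).2) ?_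
    rw [g.le_ginf_iff, zpow_zero, inv_one, one_mul, hgP]
    exact pow_mem (braidGen_mem n (by omega) (by omega)) k
  · refine le_antisymm (g.gsup_pow_le _ hsle k) ?_
    exact val_sup_ge g hn hgP hgD _ k hk 2 3 (by omega) (by omega) (by omega)
      (vec_s3_pow n hn k).1

lemma val_ba (hn : 4 ≤ n) (hgP : g.P = braidMonoid n) (hgD : g.Δ = braidDelta n)
    (k : ℕ) (hk : 1 ≤ k) :
    g.ginf (braidGen n 3 ^ k * braidGen n 1 ^ k) = 0
      ∧ g.gsup (braidGen n 3 ^ k * braidGen n 1 ^ k) = (k:ℤ) := by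
  have hcomm : Commute (braidGen n 3) (braidGen n 1) :=
    (braid_comm n le_rfl (by omega) (by omega)).symm
  have hBA : braidGen n 3 ^ k * braidGen n 1 ^ k = (braidGen n 3 * braidGen n 1) ^ k :=
    (Commute.mul_pow hcomm k).symm
  have hsle : g.gsup (braidGen n 3 * braidGen n 1) ≤ 1 := by
    rw [g.gsup_le_iff, hgD, hgP, zpow_one]
    exact sig31_inv_delta n hn
  rw [hBA]
  constructor
  · refine le_antisymm (val_inf_le g hn hgP hgD _ (vec_ba_pow n hn k).2) ?_
    rw [g.le_ginf_iff, zpow_zero, inv_one, one_mul, hgP]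
    exact pow_mem (mul_mem (braidGen_mem n (by omega) (by omega))
      (braidGen_mem n le_rfl (by omega))) k
  · refine le_antisymm (g.gsup_pow_le _ hsle k) ?_
    exact val_sup_ge g hn hgP hgD _ k hk 0 1 (by omega) (by omega) (by omega)
      (vec_ba_pow n hn k).1

end Values

/-- Example 3.2: in `B_n` (`n ≥ 4`) with its classical Garside
structure, every nonzero power `Δ^k` is a product of three absorbable elements;
explicitly, for `k ≥ 1`, `Δ^k = A·B·C` with `A = σ₁^k`, `B = σ₃^k`,
`C = A⁻¹B⁻¹Δ^k` all absorbable, and `Δ^{-k} = C⁻¹B⁻¹A⁻¹` with `A⁻¹, B⁻¹, C⁻¹`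
absorbable. -/
theorem BraidGroup.delta_power_product_of_absorbables {n : ℕ} (hn : 4 ≤ n)
    (g : GarsideGroup (BraidGroup n)) (hg : IsClassicalBraidStructure g) :
    (∀ k : ℤ, k ≠ 0 → ∃ A B C : BraidGroup n,
      g.Absorbable A ∧ g.Absorbable B ∧ g.Absorbable C ∧ g.Δ ^ k = A * B * C) ∧
    (∀ k : ℕ, 1 ≤ k →
      g.Absorbable (braidGen n 1 ^ k) ∧
      g.Absorbable (braidGen n 3 ^ k) ∧
      g.Absorbable ((braidGen n 1 ^ k)⁻¹ * (braidGen n 3 ^ k)⁻¹ * g.Δ ^ k) ∧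
      g.Δ ^ k = braidGen n 1 ^ k * braidGen n 3 ^ k *
        ((braidGen n 1 ^ k)⁻¹ * (braidGen n 3 ^ k)⁻¹ * g.Δ ^ k) ∧
      g.Absorbable (braidGen n 1 ^ k)⁻¹ ∧
      g.Absorbable (braidGen n 3 ^ k)⁻¹ ∧
      g.Absorbable ((braidGen n 1 ^ k)⁻¹ * (braidGen n 3 ^ k)⁻¹ * g.Δ ^ k)⁻¹ ∧
      g.Δ ^ (-(k : ℤ)) =
        ((braidGen n 1 ^ k)⁻¹ * (braidGen n 3 ^ k)⁻¹ * g.Δ ^ k)⁻¹ *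
          (braidGen n 3 ^ k)⁻¹ * (braidGen n 1 ^ k)⁻¹) := by
  obtain ⟨hgP, hgD⟩ := hg
  have main : ∀ k : ℕ, 1 ≤ k →
      g.Absorbable (braidGen n 1 ^ k) ∧
      g.Absorbable (braidGen n 3 ^ k) ∧
      g.Absorbable ((braidGen n 1 ^ k)⁻¹ * (braidGen n 3 ^ k)⁻¹ * g.Δ ^ k) ∧
      g.Δ ^ k = braidGen n 1 ^ k * braidGen n 3 ^ k *
        ((braidGen n 1 ^ k)⁻¹ * (braidGen n 3 ^ k)⁻¹ * g.Δ ^ k) ∧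
      g.Absorbable (braidGen n 1 ^ k)⁻¹ ∧
      g.Absorbable (braidGen n 3 ^ k)⁻¹ ∧
      g.Absorbable ((braidGen n 1 ^ k)⁻¹ * (braidGen n 3 ^ k)⁻¹ * g.Δ ^ k)⁻¹ ∧
      g.Δ ^ (-(k : ℤ)) =
        ((braidGen n 1 ^ k)⁻¹ * (braidGen n 3 ^ k)⁻¹ * g.Δ ^ k)⁻¹ *
          (braidGen n 3 ^ k)⁻¹ * (braidGen n 1 ^ k)⁻¹ := by
    intro k hk
    set A := braidGen n 1 ^ k with hA
    set B := braidGen n 3 ^ k with hB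
    obtain ⟨hAinf, hAsup⟩ := val_s1 g hn hgP hgD k hk
    obtain ⟨hBinf, hBsup⟩ := val_s3 g hn hgP hgD k hk
    obtain ⟨hBAinf, hBAsup⟩ := val_ba g hn hgP hgD k hk
    have hABcomm : A * B = B * A :=
      Commute.pow_pow (braid_comm n le_rfl (by omega) (by omega)) k k
    have hCinf : g.ginf (A⁻¹ * B⁻¹ * g.Δ ^ k) = 0 := by
      have h1 : A⁻¹ * B⁻¹ * g.Δ ^ k = (B * A)⁻¹ * g.Δ ^ (k:ℤ) := by
        rw [← zpow_natCast g.Δ k]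
        group
      rw [h1, g.ginf_mul_zpow, g.ginf_inv, hBAsup]
      omega
    have hACeq : A * (A⁻¹ * B⁻¹ * g.Δ ^ k) = B⁻¹ * g.Δ ^ (k:ℤ) := by
      rw [← zpow_natCast g.Δ k]
      group
    have hACinf : g.ginf (B⁻¹ * g.Δ ^ (k:ℤ)) = 0 := by
      rw [g.ginf_mul_zpow, g.ginf_inv, hBsup]
      omega
    have hACsup : g.gsup (B⁻¹ * g.Δ ^ (k:ℤ)) = (k:ℤ) := by
      rw [g.gsup_mul_zpow, g.gsup_inv, hBinf]
      omega
    have hProd : g.Δ ^ k = A * B * (A⁻¹ * B⁻¹ * g.Δ ^ k) := by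
      rw [hABcomm]
      group
    refine ⟨?_, ?_, ?_, hProd, ?_, ?_, ?_, ?_⟩
    · exact ⟨Or.inl hAinf, B, by rw [hBAinf, hBinf], by rw [hBAsup, hBsup]⟩
    · exact ⟨Or.inl hBinf, A, by rw [hABcomm, hBAinf, hAinf], by rw [hABcomm, hBAsup, hAsup]⟩
    · exact ⟨Or.inl hCinf, A, by rw [hACeq, hACinf, hAinf], by rw [hACeq, hACsup, hAsup]⟩
    · refine ⟨Or.inr (by rw [g.gsup_inv, hAinf, neg_zero]), B * A, ?_, ?_⟩
      · rw [mul_inv_cancel_right, hBinf, hBAinf]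
      · rw [mul_inv_cancel_right, hBsup, hBAsup]
    · refine ⟨Or.inr (by rw [g.gsup_inv, hBinf, neg_zero]), A * B, ?_, ?_⟩
      · rw [mul_inv_cancel_right, hAinf, hABcomm, hBAinf]
      · rw [mul_inv_cancel_right, hAsup, hABcomm, hBAsup]
    · refine ⟨Or.inr (by rw [g.gsup_inv, hCinf, neg_zero]),
        A * (A⁻¹ * B⁻¹ * g.Δ ^ k), ?_, ?_⟩
      · rw [mul_inv_cancel_right, hAinf, hACeq, hACinf]
      · rw [mul_inv_cancel_right, hAsup, hACeq, hACsup]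
    · have h2 : g.Δ ^ (-(k:ℤ)) = (g.Δ ^ k)⁻¹ := by
        rw [zpow_neg, zpow_natCast]
      rw [h2]
      conv_lhs => rw [hProd]
      group
  refine ⟨?_, main⟩
  intro k hk0
  rcases hk0.lt_or_gt with hneg | hpos
  · have hm : (((-k).toNat : ℤ)) = -k := Int.toNat_of_nonneg (by omega)
    have hm1 : 1 ≤ (-k).toNat := by omega
    obtain ⟨a1, a2, a3, a4, b1, b2, b3, b4⟩ := main (-k).toNat hm1
    refine ⟨_, _, _, b3, b2, b1, ?_⟩
    have hkk : k = -(((-k).toNat : ℕ) : ℤ) := by omega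
    conv_lhs => rw [hkk]
    exact b4
  · have hm : ((k.toNat : ℤ)) = k := Int.toNat_of_nonneg (by omega)
    have hm1 : 1 ≤ k.toNat := by omega
    obtain ⟨a1, a2, a3, a4, _⟩ := main k.toNat hm1
    refine ⟨_, _, _, a1, a2, a3, ?_⟩
    rw [← hm, zpow_natCast]
    exact a4
end

section
/- Let n ≥ 4 and let x ∈ B_n⁺ be a positive braid with inf(x) = 0 whose left normal form x₁⋯x_r (r ≥ 2) coincides with its right normal form, whose first and last factors are the single atom σ_⌊(n+1)/2⌋, and which has some factor x_j with 1 < j < r of the form a⁻¹Δ for an atom a. Let z ∈ B_n with inf(z) = 0 and suppose λ = λ_x(z) = max{k ∈ ℤ : x^k ≼ z} satisfies λ ≥ 2. Then the product of the first (λ−1)r factors of the left normal form of z is exactly x^{λ−1}, i.e., Δ^{(λ−1)r} ∧ z = x^{λ−1}. -/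
section AuxGarside

namespace GarsideGroup

variable {G : Type*} [Group G] (g : GarsideGroup G)

lemma aux_ldvd_def {u v : G} : g.LDvd u v ↔ u⁻¹ * v ∈ g.P := Iff.rfl

lemma aux_ldvd_refl (u : G) : g.LDvd u u := by
  simp [LDvd, g.P.one_mem]

lemma aux_ldvd_trans {u v w : G} (h1 : g.LDvd u v) (h2 : g.LDvd v w) : g.LDvd u w := by
  have := g.P.mul_mem h1 h2
  simpa [LDvd, mul_assoc] using this

lemma aux_ldvd_mul_right {u v w : G} (h : g.LDvd u v) (hw : w ∈ g.P) :
    g.LDvd u (v * w) := by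
  have := g.P.mul_mem h hw
  simpa [LDvd, mul_assoc] using this

lemma aux_ldvd_cancel_left {u v : G} (w : G) (h : g.LDvd (w * u) (w * v)) : g.LDvd u v := by
  simpa [LDvd, mul_assoc] using h

lemma aux_ldvd_mul_left {u v : G} (w : G) (h : g.LDvd u v) : g.LDvd (w * u) (w * v) := by
  simpa [LDvd, mul_assoc] using h

lemma aux_one_ldvd {p : G} (hp : p ∈ g.P) : g.LDvd 1 p := by simpa [LDvd]

lemma aux_ldvd_mem {u v : G} (hu : u ∈ g.P) (h : g.LDvd u v) : v ∈ g.P := by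
  have := g.P.mul_mem hu h
  simpa [LDvd] using this

/-- `τ` of a simple element is positive. -/
lemma aux_tau_simple {s : G} (hs : g.Simple s) : g.Δ⁻¹ * s * g.Δ ∈ g.P := by
  rcases hs with ⟨hsP, hsd⟩
  -- t := s⁻¹Δ ∈ P, and Δ * t⁻¹ = s ∈ P, so by simples_symm (backwards) t⁻¹Δ ∈ P
  have ht : s⁻¹ * g.Δ ∈ g.P := hsd
  have h2 : g.Δ * (s⁻¹ * g.Δ)⁻¹ ∈ g.P := by
    simpa [mul_assoc] using hsP
  have := (g.simples_symm (s⁻¹ * g.Δ)).mpr ⟨ht, h2⟩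
  have h3 : (s⁻¹ * g.Δ)⁻¹ * g.Δ ∈ g.P := this.2
  simpa [mul_assoc] using h3

lemma aux_tauinv_simple {s : G} (hs : g.Simple s) : g.Δ * s * g.Δ⁻¹ ∈ g.P := by
  rcases hs with ⟨hsP, hsd⟩
  have hw : g.Δ * s⁻¹ ∈ g.P := ((g.simples_symm s).mp ⟨hsP, hsd⟩).2
  have hwd : (g.Δ * s⁻¹)⁻¹ * g.Δ ∈ g.P := by
    simpa [mul_assoc] using hsP
  have := ((g.simples_symm (g.Δ * s⁻¹)).mp ⟨hw, hwd⟩).2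
  simpa [mul_assoc] using this

/-- `τ` preserves positivity. -/
lemma aux_tau_mem {p : G} (hp : p ∈ g.P) : g.Δ⁻¹ * p * g.Δ ∈ g.P := by
  have h := g.simples_generate p hp
  clear hp
  induction h using Submonoid.closure_induction with
  | mem s hs => exact g.aux_tau_simple ⟨hs.1, hs.2⟩
  | one => simpa using g.P.one_mem
  | mul a b ha hb iha ihb =>
      have : (g.Δ⁻¹ * a * g.Δ) * (g.Δ⁻¹ * b * g.Δ) = g.Δ⁻¹ * (a * b) * g.Δ := by
        group
      rw [← this]; exact g.P.mul_mem iha ihb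

lemma aux_tauinv_mem {p : G} (hp : p ∈ g.P) : g.Δ * p * g.Δ⁻¹ ∈ g.P := by
  have h := g.simples_generate p hp
  clear hp
  induction h using Submonoid.closure_induction with
  | mem s hs => exact g.aux_tauinv_simple ⟨hs.1, hs.2⟩
  | one => simpa using g.P.one_mem
  | mul a b ha hb iha ihb =>
      have : (g.Δ * a * g.Δ⁻¹) * (g.Δ * b * g.Δ⁻¹) = g.Δ * (a * b) * g.Δ⁻¹ := by
        group
      rw [← this]; exact g.P.mul_mem iha ihb

lemma aux_taupow_mem (k : ℕ) {p : G} (hp : p ∈ g.P) :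
    (g.Δ ^ k)⁻¹ * p * g.Δ ^ k ∈ g.P := by
  induction k with
  | zero => simpa using hp
  | succ k ih =>
      have : (g.Δ ^ (k+1))⁻¹ * p * g.Δ ^ (k+1)
          = g.Δ⁻¹ * ((g.Δ ^ k)⁻¹ * p * g.Δ ^ k) * g.Δ := by
        rw [pow_succ]; group
      rw [this]; exact g.aux_tau_mem ih

lemma aux_taupowinv_mem (k : ℕ) {p : G} (hp : p ∈ g.P) :
    g.Δ ^ k * p * (g.Δ ^ k)⁻¹ ∈ g.P := by
  induction k with
  | zero => simpa using hp
  | succ k ih =>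
      have : g.Δ ^ (k+1) * p * (g.Δ ^ (k+1))⁻¹
          = g.Δ * (g.Δ ^ k * p * (g.Δ ^ k)⁻¹) * g.Δ⁻¹ := by
        rw [pow_succ']; group
      rw [this]; exact g.aux_tauinv_mem ih

/-- monotonicity of right multiplication by `Δ^k`. -/
lemma aux_ldvd_mul_deltapow {u v : G} (k : ℕ) (h : g.LDvd u v) :
    g.LDvd (u * g.Δ ^ k) (v * g.Δ ^ k) := by
  have := g.aux_taupow_mem k h
  simpa [LDvd, mul_assoc] using this

/-- if `u ≼ Δ^k` and `v ≼ Δ^l` then `u*v ≼ Δ^(k+l)`. -/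
lemma aux_mul_ldvd_deltapow {u v : G} {k l : ℕ} (hu : g.LDvd u (g.Δ ^ k))
    (hv : g.LDvd v (g.Δ ^ l)) : g.LDvd (u * v) (g.Δ ^ (k + l)) := by
  have h1 : (u * v)⁻¹ * g.Δ ^ (k + l) = (v⁻¹ * g.Δ ^ l) * ((g.Δ ^ l)⁻¹ * (u⁻¹ * g.Δ ^ k) * g.Δ ^ l) := by
    rw [pow_add]; group
  rw [aux_ldvd_def, h1]
  exact g.P.mul_mem hv (g.aux_taupow_mem l hu)

/-- every product of simples is `≼ Δ^length`. -/
lemma aux_prod_simples_ldvd {S : List G} (hS : ∀ s ∈ S, g.Simple s) :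
    g.LDvd S.prod (g.Δ ^ S.length) := by
  induction S with
  | nil => simpa [LDvd] using g.P.one_mem
  | cons a t ih =>
      have ha : g.Simple a := hS a (by simp)
      have ht := ih (fun s hs => hS s (by simp [hs]))
      have h1 : g.LDvd a (g.Δ ^ 1) := by simpa [pow_one] using ha.2
      have := g.aux_mul_ldvd_deltapow h1 ht
      simpa [List.length_cons, pow_succ, Nat.add_comm] using this

lemma aux_pow_ldvd_deltapow {x : G} {r : ℕ} (h : g.LDvd x (g.Δ ^ r)) (k : ℕ) :
    g.LDvd (x ^ k) (g.Δ ^ (k * r)) := by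
  induction k with
  | zero => simpa [LDvd] using g.P.one_mem
  | succ k ih =>
      have := g.aux_mul_ldvd_deltapow ih h
      have e1 : x ^ k * x = x ^ (k+1) := by rw [pow_succ]
      have e2 : k * r + r = (k+1) * r := by ring
      rwa [e1, e2] at this

lemma aux_lgcd_mem {a b : G} (ha : a ∈ g.P) (hb : b ∈ g.P) : g.lgcd a b ∈ g.P := by
  have := g.lgcd_greatest a b 1 (by simpa) (by simpa)
  simpa using this

lemma aux_lgcd_ldvd_left (a b : G) : g.LDvd (g.lgcd a b) a := g.lgcd_dvd_left a b
lemma aux_lgcd_ldvd_right (a b : G) : g.LDvd (g.lgcd a b) b := g.lgcd_dvd_right a b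
lemma aux_ldvd_lgcd {a b c : G} (h1 : g.LDvd c a) (h2 : g.LDvd c b) : g.LDvd c (g.lgcd a b) :=
  g.lgcd_greatest a b c h1 h2

/-- the key "head" lemma: if `v ≼ U·Δ` then `v ≼ (v ∧ U)·Δ`  (for positive `U, v`). -/
lemma aux_gamma' {U v : G} (hU : U ∈ g.P) (hv : v ∈ g.P)
    (h : g.LDvd v (U * g.Δ)) : g.LDvd v (g.lgcd v U * g.Δ) := by
  obtain ⟨m, hm1, hm2, hm3⟩ := g.llcm_exists g.Δ v
  -- m ≼ v * Δ
  have hmvd : g.LDvd m (v * g.Δ) := by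
    refine hm3 (v * g.Δ) ?_ ?_
    · show g.Δ⁻¹ * (v * g.Δ) ∈ g.P
      have := g.aux_tau_mem hv
      simpa [mul_assoc] using this
    · show v⁻¹ * (v * g.Δ) ∈ g.P
      simpa using g.delta_pos
  -- m ≼ U * Δ
  have hmUd : g.LDvd m (U * g.Δ) := by
    refine hm3 (U * g.Δ) ?_ h
    show g.Δ⁻¹ * (U * g.Δ) ∈ g.P
    have := g.aux_tau_mem hU
    simpa [mul_assoc] using this
  -- y := Δ m Δ⁻¹ ... we show  y' := Δ * (Δ⁻¹ * m) * Δ⁻¹  divides v and U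
  set t : G := g.Δ⁻¹ * m with ht
  have hyv : g.LDvd (g.Δ * t * g.Δ⁻¹) v := by
    show (g.Δ * t * g.Δ⁻¹)⁻¹ * v ∈ g.P
    have h1 : m⁻¹ * (v * g.Δ) ∈ g.P := hmvd
    have h2 : g.Δ * (m⁻¹ * (v * g.Δ)) * g.Δ⁻¹ ∈ g.P := g.aux_tauinv_mem h1
    have e : (g.Δ * t * g.Δ⁻¹)⁻¹ * v = g.Δ * (m⁻¹ * (v * g.Δ)) * g.Δ⁻¹ := by
      rw [ht]; group
    rw [e]; exact h2
  have hyU : g.LDvd (g.Δ * t * g.Δ⁻¹) U := by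
    show (g.Δ * t * g.Δ⁻¹)⁻¹ * U ∈ g.P
    have h1 : m⁻¹ * (U * g.Δ) ∈ g.P := hmUd
    have h2 : g.Δ * (m⁻¹ * (U * g.Δ)) * g.Δ⁻¹ ∈ g.P := g.aux_tauinv_mem h1
    have e : (g.Δ * t * g.Δ⁻¹)⁻¹ * U = g.Δ * (m⁻¹ * (U * g.Δ)) * g.Δ⁻¹ := by
      rw [ht]; group
    rw [e]; exact h2
  have hylg : g.LDvd (g.Δ * t * g.Δ⁻¹) (g.lgcd v U) := g.aux_ldvd_lgcd hyv hyU
  -- v ≼ m = (ΔtΔ⁻¹) * Δ  ≼ lgcd v U * Δ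
  have hvm : g.LDvd v m := hm2
  have hme : m = (g.Δ * t * g.Δ⁻¹) * g.Δ := by rw [ht]; group
  have : g.LDvd ((g.Δ * t * g.Δ⁻¹) * g.Δ) (g.lgcd v U * g.Δ) := by
    have := g.aux_ldvd_mul_deltapow 1 hylg
    simpa [pow_one] using this
  exact g.aux_ldvd_trans (hme ▸ hvm) this

/-- iterated head lemma: if `v ≼ Δ^(k+1)` then `v ≼ (Δ ∧ v)·Δ^k`. -/
lemma aux_gamma (k : ℕ) {v : G} (hv : v ∈ g.P)
    (h : g.LDvd v (g.Δ ^ (k+1))) : g.LDvd v (g.lgcd g.Δ v * g.Δ ^ k) := by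
  induction k generalizing v with
  | zero =>
      have h1 : g.LDvd v (g.lgcd g.Δ v) :=
        g.aux_ldvd_lgcd (by simpa [pow_one] using h) (g.aux_ldvd_refl v)
      simpa [pow_zero] using h1
  | succ k ih =>
      have hpow : g.Δ ^ (k+1) ∈ g.P := pow_mem g.delta_pos (k+1)
      have h' : g.LDvd v (g.Δ ^ (k+1) * g.Δ) := by
        rw [← pow_succ]; exact h
      have h2 := g.aux_gamma' hpow hv h'
      set u2 : G := g.lgcd v (g.Δ ^ (k+1)) with hu2
      have hu2P : u2 ∈ g.P := g.aux_lgcd_mem hv hpow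
      have hu2d : g.LDvd u2 (g.Δ ^ (k+1)) := g.aux_lgcd_ldvd_right v (g.Δ ^ (k+1))
      have hu2v : g.LDvd u2 v := g.aux_lgcd_ldvd_left v (g.Δ ^ (k+1))
      have h3 := ih hu2P hu2d
      -- lgcd Δ u2 ≼ lgcd Δ v
      have h4 : g.LDvd (g.lgcd g.Δ u2) (g.lgcd g.Δ v) :=
        g.aux_ldvd_lgcd (g.aux_lgcd_ldvd_left g.Δ u2)
          (g.aux_ldvd_trans (g.aux_lgcd_ldvd_right g.Δ u2) hu2v)
      have h5 : g.LDvd u2 (g.lgcd g.Δ v * g.Δ ^ k) :=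
        g.aux_ldvd_trans h3 (g.aux_ldvd_mul_deltapow k h4)
      -- v ≼ u2 * Δ ≼ (lgcd Δ v * Δ^k) * Δ = lgcd Δ v * Δ^(k+1)
      have h6 : g.LDvd (u2 * g.Δ) (g.lgcd g.Δ v * g.Δ ^ k * g.Δ) := by
        have := g.aux_ldvd_mul_deltapow 1 h5
        simpa [pow_one] using this
      have e : g.lgcd g.Δ v * g.Δ ^ k * g.Δ = g.lgcd g.Δ v * g.Δ ^ (k+1) := by
        rw [pow_succ, mul_assoc]
      rw [e] at h6
      exact g.aux_ldvd_trans h2 h6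

end GarsideGroup

end AuxGarside

section AuxBraid

open Multiplicative

/-- exponent-sum homomorphism `B_n → ℤ`. -/
def braidExp (n : ℕ) : BraidGroup n →* Multiplicative ℤ :=
  PresentedGroup.toGroup (f := fun _ : Fin (n-1) => ofAdd (1:ℤ)) (by
    rintro r ⟨i, j, hc⟩
    rcases hc with ⟨hij, rfl⟩ | ⟨hij, rfl⟩ <;>
    · simp only [map_mul, map_inv, FreeGroup.lift_apply_of]
      decide)

/-- exponent sum, additively. -/
def eZ {n : ℕ} (x : BraidGroup n) : ℤ := toAdd (braidExp n x)

lemma eZ_mul {n : ℕ} (x y : BraidGroup n) : eZ (x * y) = eZ x + eZ y := by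
  simp [eZ]

lemma eZ_one {n : ℕ} : eZ (1 : BraidGroup n) = 0 := by simp [eZ]

lemma eZ_inv {n : ℕ} (x : BraidGroup n) : eZ x⁻¹ = - eZ x := by simp [eZ]

lemma eZ_gen {n i : ℕ} (h1 : 1 ≤ i) (h2 : i ≤ n - 1) : eZ (braidGen n i) = 1 := by
  rw [braidGen, dif_pos ⟨h1, h2⟩]
  show toAdd (braidExp n (PresentedGroup.of _)) = 1
  rw [braidExp, PresentedGroup.toGroup.of]
  simp

lemma eZ_nonneg {n : ℕ} {p : BraidGroup n} (hp : p ∈ braidMonoid n) : 0 ≤ eZ p := by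
  induction hp using Submonoid.closure_induction with
  | mem x hx => obtain ⟨i, h1, h2, rfl⟩ := hx; rw [eZ_gen h1 h2]; norm_num
  | one => simp [eZ_one]
  | mul a b ha hb iha ihb => rw [eZ_mul]; omega

lemma eZ_eq_zero_iff {n : ℕ} {p : BraidGroup n} (hp : p ∈ braidMonoid n) :
    eZ p = 0 → p = 1 := by
  have : 0 ≤ eZ p ∧ (eZ p = 0 → p = 1) := by
    induction hp using Submonoid.closure_induction with
    | mem x hx =>
        obtain ⟨i, h1, h2, rfl⟩ := hx; rw [eZ_gen h1 h2]
        exact ⟨by norm_num, by omega⟩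
    | one => simp [eZ_one]
    | mul a b ha hb iha ihb =>
        rw [eZ_mul]
        refine ⟨by omega, fun h0 => ?_⟩
        have h1 : eZ a = 0 := by omega
        have h2 : eZ b = 0 := by omega
        rw [iha.2 h1, ihb.2 h2, one_mul]
  exact this.2

/-- image of a generator in the symmetric group. -/
def braidPermF (n : ℕ) (i : Fin (n-1)) : Equiv.Perm (Fin n) :=
  Equiv.swap ⟨i.val, by have := i.isLt; omega⟩ ⟨i.val + 1, by have := i.isLt; omega⟩

private lemma swap_braid_rel {α : Type*} [DecidableEq α] {a b c : α}
    (hab : a ≠ b) (hac : a ≠ c) (hbc : b ≠ c) :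
    Equiv.swap a b * Equiv.swap b c * Equiv.swap a b
      = Equiv.swap b c * Equiv.swap a b * Equiv.swap b c := by
  have h1 : Equiv.swap b c * Equiv.swap a b * Equiv.swap b c = Equiv.swap c a :=
    Equiv.swap_mul_swap_mul_swap hab hac
  have h2 : Equiv.swap a b * Equiv.swap b c * Equiv.swap a b = Equiv.swap a c := by
    have := Equiv.swap_mul_swap_mul_swap hbc.symm (Ne.symm hac)
    rwa [Equiv.swap_comm b a, Equiv.swap_comm c b] at this
  rw [h2, h1, Equiv.swap_comm c a]

private lemma swap_comm_rel {α : Type*} [DecidableEq α] {a b c d : α}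
    (hac : a ≠ c) (had : a ≠ d) (hbc : b ≠ c) (hbd : b ≠ d) :
    Equiv.swap a b * Equiv.swap c d = Equiv.swap c d * Equiv.swap a b := by
  have hd : (Equiv.swap a b).Disjoint (Equiv.swap c d) := by
    intro x
    by_cases hx : x = a ∨ x = b
    · right
      rcases hx with rfl | rfl
      · exact Equiv.swap_apply_of_ne_of_ne hac had
      · exact Equiv.swap_apply_of_ne_of_ne hbc hbd
    · left
      push_neg at hx
      exact Equiv.swap_apply_of_ne_of_ne hx.1 hx.2
  exact hd.commute.eq

/-- the permutation homomorphism `B_n → S_n`. -/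
def braidPerm (n : ℕ) : BraidGroup n →* Equiv.Perm (Fin n) :=
  PresentedGroup.toGroup (f := braidPermF n) (by
    rintro r ⟨i, j, hc⟩
    rcases hc with ⟨hij, rfl⟩ | ⟨hij, rfl⟩
    · obtain ⟨iv, hiv⟩ := i; obtain ⟨jv, hjv⟩ := j
      have hij' : iv + 1 = jv := hij
      subst hij'
      simp only [map_mul, map_inv, FreeGroup.lift_apply_of]
      rw [mul_inv_eq_one]
      simp only [braidPermF]
      exact swap_braid_rel ((by intro h; simp only [Fin.mk.injEq] at h; omega)) ((by intro h; simp only [Fin.mk.injEq] at h; omega))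
        ((by intro h; simp only [Fin.mk.injEq] at h; omega))
    · obtain ⟨iv, hiv⟩ := i; obtain ⟨jv, hjv⟩ := j
      have hij' : iv + 2 ≤ jv := hij
      simp only [map_mul, map_inv, FreeGroup.lift_apply_of]
      rw [mul_inv_eq_one]
      simp only [braidPermF]
      exact swap_comm_rel ((by intro h; simp only [Fin.mk.injEq] at h; omega)) ((by intro h; simp only [Fin.mk.injEq] at h; omega))
        ((by intro h; simp only [Fin.mk.injEq] at h; omega)) ((by intro h; simp only [Fin.mk.injEq] at h; omega)))

lemma braidPerm_gen {n i : ℕ} (h1 : 1 ≤ i) (h2 : i ≤ n - 1) :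
    braidPerm n (braidGen n i)
      = Equiv.swap ⟨i - 1, by omega⟩ ⟨i, by omega⟩ := by
  rw [braidGen, dif_pos ⟨h1, h2⟩, braidPerm, PresentedGroup.toGroup.of]
  show Equiv.swap _ _ = _
  simp only [braidPermF, show i - 1 + 1 = i from by omega]

end AuxBraid

section AuxInv

/-- number of inversions of a permutation of `Fin n`. -/
def invCount {n : ℕ} (w : Equiv.Perm (Fin n)) : ℕ :=
  (Finset.univ.filter fun p : Fin n × Fin n => p.1 < p.2 ∧ w p.2 < w p.1).card

lemma invCount_one {n : ℕ} : invCount (1 : Equiv.Perm (Fin n)) = 0 := by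
  rw [invCount, Finset.card_eq_zero, Finset.filter_eq_empty_iff]
  rintro p -
  rintro ⟨h1, h2⟩
  exact absurd h2 (not_lt_of_gt h1)

lemma invCount_mul_le {n : ℕ} (u v : Equiv.Perm (Fin n)) :
    invCount (u * v) ≤ invCount u + invCount v := by
  classical
  set B := (Finset.univ.filter fun p : Fin n × Fin n => p.1 < p.2 ∧ u p.2 < u p.1) with hB
  set C := (Finset.univ.filter fun p : Fin n × Fin n => p.1 < p.2 ∧ v p.2 < v p.1) with hC
  have key : invCount (u * v) ≤ (B.disjSum C).card := by
    apply Finset.card_le_card_of_injOn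
      (fun p => if v p.1 < v p.2 then Sum.inl (v p.1, v p.2) else Sum.inr p)
    · intro p hp
      have hp : p ∈ Finset.univ.filter (fun p : Fin n × Fin n => p.1 < p.2 ∧ (u * v) p.2 < (u * v) p.1) := hp
      show (if v p.1 < v p.2 then Sum.inl (v p.1, v p.2) else Sum.inr p) ∈ B.disjSum C
      rw [Finset.mem_filter] at hp
      simp only [Finset.mem_filter, Finset.mem_univ, true_and, Equiv.Perm.mul_apply] at hp
      obtain ⟨h1, h2⟩ := hp
      by_cases hv : v p.1 < v p.2
      · rw [if_pos hv, Finset.inl_mem_disjSum]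
        simp only [hB, Finset.mem_filter, Finset.mem_univ, true_and]
        exact ⟨hv, h2⟩
      · rw [if_neg hv, Finset.inr_mem_disjSum]
        simp only [hC, Finset.mem_filter, Finset.mem_univ, true_and]
        refine ⟨h1, ?_⟩
        rcases lt_or_eq_of_le (not_lt.mp hv) with h | h
        · exact h
        · exact absurd (v.injective h) (ne_of_gt h1)
    · intro p hp q hq hfq
      by_cases hv1 : v p.1 < v p.2 <;> by_cases hv2 : v q.1 < v q.2 <;>
        simp only [hv1, hv2, if_pos, if_neg, if_true, if_false, ite_true, ite_false] at hfq
      · simp only [Sum.inl.injEq, Prod.mk.injEq] at hfq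
        have e1 := v.injective hfq.1
        have e2 := v.injective hfq.2
        exact Prod.ext e1 e2
      · exact absurd hfq (by simp)
      · exact absurd hfq (by simp)
      · simpa using hfq
  rw [Finset.card_disjSum] at key
  exact key

lemma invCount_swap_adj {n : ℕ} {a b : Fin n} (hab : a.val + 1 = b.val) :
    invCount (Equiv.swap a b) ≤ 1 := by
  classical
  have hsub : (Finset.univ.filter fun p : Fin n × Fin n =>
      p.1 < p.2 ∧ (Equiv.swap a b) p.2 < (Equiv.swap a b) p.1) ⊆ {(a, b)} := by
    intro p hp
    simp only [Finset.mem_filter, Finset.mem_univ, true_and] at hp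
    obtain ⟨h1, h2⟩ := hp
    have h1' : p.1.val < p.2.val := h1
    rw [Finset.mem_singleton]
    rcases eq_or_ne p.2 a with e2a | e2a
    · rw [e2a, Equiv.swap_apply_left] at h2
      rcases eq_or_ne p.1 a with e1a | e1a
      · have c1 := congrArg Fin.val e1a
        have c2 := congrArg Fin.val e2a
        omega
      · rcases eq_or_ne p.1 b with e1b | e1b
        · rw [e1b, Equiv.swap_apply_right] at h2
          have : (b:ℕ) < a.val := by
            have := congrArg Fin.val e1b; have := congrArg Fin.val e2a; omega
          omega
        · rw [Equiv.swap_apply_of_ne_of_ne e1a e1b] at h2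
          have hc2 := congrArg Fin.val e2a
          have hlt : (b:ℕ) < p.1.val := h2
          omega
    · rcases eq_or_ne p.2 b with e2b | e2b
      · rw [e2b, Equiv.swap_apply_right] at h2
        rcases eq_or_ne p.1 a with e1a | e1a
        · rw [e1a, Equiv.swap_apply_left] at h2
          rw [Prod.ext_iff]; exact ⟨e1a, e2b⟩
        · rcases eq_or_ne p.1 b with e1b | e1b
          · rw [e1b, Equiv.swap_apply_right] at h2
            have := congrArg Fin.val e1b
            have hlt : (a:ℕ) < a.val := h2
            omega
          · rw [Equiv.swap_apply_of_ne_of_ne e1a e1b] at h2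
            have := congrArg Fin.val e2b
            have hlt : (a:ℕ) < p.1.val := h2
            omega
      · rw [Equiv.swap_apply_of_ne_of_ne e2a e2b] at h2
        rcases eq_or_ne p.1 a with e1a | e1a
        · rw [e1a, Equiv.swap_apply_left] at h2
          have hlt : (p.2:ℕ) < b.val := h2
          have := congrArg Fin.val e1a
          have hne : p.2.val ≠ a.val := fun h => e2a (Fin.ext h)
          omega
        · rcases eq_or_ne p.1 b with e1b | e1b
          · rw [e1b, Equiv.swap_apply_right] at h2
            have hlt : (p.2:ℕ) < a.val := h2
            have := congrArg Fin.val e1b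
            omega
          · rw [Equiv.swap_apply_of_ne_of_ne e1a e1b] at h2
            have hlt : (p.2:ℕ) < p.1.val := h2
            omega
  calc invCount (Equiv.swap a b) ≤ ({(a,b)} : Finset (Fin n × Fin n)).card :=
        Finset.card_le_card hsub
    _ = 1 := Finset.card_singleton _

lemma invCount_le_eZ {n : ℕ} {p : BraidGroup n} (hp : p ∈ braidMonoid n) :
    (invCount (braidPerm n p) : ℤ) ≤ eZ p := by
  induction hp using Submonoid.closure_induction with
  | mem x hx =>
      obtain ⟨i, h1, h2, rfl⟩ := hx
      rw [eZ_gen h1 h2, braidPerm_gen h1 h2]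
      have := invCount_swap_adj (n := n) (a := ⟨i-1, by omega⟩) (b := ⟨i, by omega⟩)
        (by simp; omega)
      exact_mod_cast this
  | one => rw [map_one, eZ_one, invCount_one]; norm_num
  | mul a b ha hb iha ihb =>
      rw [map_mul, eZ_mul]
      have := invCount_mul_le (braidPerm n a) (braidPerm n b)
      push_cast
      calc (invCount (braidPerm n a * braidPerm n b) : ℤ)
          ≤ (invCount (braidPerm n a) : ℤ) + invCount (braidPerm n b) := by exact_mod_cast this
        _ ≤ eZ a + eZ b := add_le_add iha ihb

end AuxInv

section AuxDelta

lemma swap_val {n : ℕ} (a b x : Fin n) :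
    ((Equiv.swap a b) x).val = if x = a then b.val else if x = b then a.val else x.val := by
  rw [Equiv.swap_apply_def]; split_ifs <;> rfl

/-- the `k`-th block `σ_{k+1} σ_k ⋯ σ_1` of `Δ`. -/
def blockB (n k : ℕ) : BraidGroup n :=
  ((List.range (k + 1)).map fun j => braidGen n (k + 1 - j)).prod

lemma blockB_succ (n k : ℕ) : blockB n (k+1) = braidGen n (k+2) * blockB n k := by
  have hfun : (fun j => braidGen n (k + 1 + 1 - j)) ∘ Nat.succ
      = fun j => braidGen n (k + 1 - j) := by
    funext j
    show braidGen n (k + 1 + 1 - (j+1)) = braidGen n (k + 1 - j)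
    congr 1
    omega
  rw [blockB, List.range_succ_eq_map, List.map_cons, List.map_map, hfun, List.prod_cons]
  rfl

lemma braidDelta_eq_partial (n : ℕ) :
    braidDelta n = ((List.range (n-1)).map fun k => blockB n k).prod := rfl

lemma blockB_mem (n k : ℕ) (hk : k < n - 1) : blockB n k ∈ braidMonoid n := by
  apply Submonoid.list_prod_mem
  intro y hy
  simp only [List.mem_map, List.mem_range] at hy
  obtain ⟨j, hj, rfl⟩ := hy
  exact Submonoid.subset_closure ⟨k + 1 - j, by omega, by omega, rfl⟩

lemma eZ_blockB (n k : ℕ) (hk : k < n - 1) : eZ (blockB n k) = k + 1 := by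
  induction k with
  | zero =>
      have : blockB n 0 = braidGen n 1 := by
        simp [blockB, List.range_succ]
      rw [this, eZ_gen (by omega) (by omega)]
      norm_num
  | succ k ih =>
      rw [blockB_succ, eZ_mul, eZ_gen (by omega) (by omega), ih (by omega)]
      push_cast
      ring

lemma eZ_delta (n : ℕ) (hn : 1 ≤ n) :
    eZ (braidDelta n) = ((Finset.range n).sum (fun i => (i:ℤ))) := by
  have key : ∀ m, m ≤ n - 1 →
      eZ (((List.range m).map fun k => blockB n k).prod)
        = (Finset.range m).sum (fun k => (k:ℤ) + 1) := by
    intro m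
    induction m with
    | zero => intro _; simp [eZ_one]
    | succ m ih =>
        intro hm
        rw [List.range_succ, List.map_append, List.prod_append]
        simp only [List.map_cons, List.map_nil, List.prod_cons, List.prod_nil, mul_one]
        rw [eZ_mul, ih (by omega), eZ_blockB n m (by omega), Finset.sum_range_succ]
        try push_cast
        try ring
  rw [braidDelta_eq_partial, key (n-1) (le_refl _)]
  have : n = (n - 1) + 1 := by omega
  rw [this, Finset.sum_range_succ' (fun i => (i:ℤ)) (n-1)]
  push_cast; ring

lemma blockB_act (n k : ℕ) (hk : k < n - 1) (x : Fin n) :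
    ((braidPerm n (blockB n k)) x).val
      = if x.val = 0 then k + 1 else if x.val ≤ k + 1 then x.val - 1 else x.val := by
  induction k with
  | zero =>
      have hb : blockB n 0 = braidGen n 1 := by simp [blockB, List.range_succ]
      rw [hb, braidPerm_gen (by omega) (by omega), swap_val]
      have hx := x.isLt
      simp only [Fin.ext_iff]
      split_ifs <;> omega
  | succ k ih =>
      have hk' : k < n - 1 := by omega
      rw [blockB_succ, map_mul, Equiv.Perm.mul_apply,
        braidPerm_gen (i := k+2) (by omega) (by omega), swap_val]
      have hx := x.isLt
      have hylt := (braidPerm n (blockB n k) x).isLt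
      simp only [Fin.ext_iff]
      rw [ih hk']
      split_ifs <;> omega

lemma delta_act (n : ℕ) (x : Fin n) :
    ((braidPerm n (braidDelta n)) x).val = n - 1 - x.val := by
  have key : ∀ m, m ≤ n - 1 → ∀ x : Fin n,
      ((braidPerm n (((List.range m).map fun k => blockB n k).prod)) x).val
        = if x.val ≤ m then m - x.val else x.val := by
    intro m
    induction m with
    | zero =>
        intro _ x
        simp only [List.range_zero, List.map_nil, List.prod_nil, map_one,
          Equiv.Perm.one_apply]
        have := x.isLt
        split_ifs <;> omega
    | succ m ih =>
        intro hm x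
        rw [List.range_succ, List.map_append, List.prod_append]
        simp only [List.map_cons, List.map_nil, List.prod_cons, List.prod_nil, mul_one]
        rw [map_mul, Equiv.Perm.mul_apply]
        have h1 := blockB_act n m (by omega) x
        have h2 := ih (by omega) (braidPerm n (blockB n m) x)
        have hx := x.isLt
        have hy := (braidPerm n (blockB n m) x).isLt
        rw [h2, h1]
        split_ifs <;> omega
  have hx := x.isLt
  have := key (n-1) (le_refl _) x
  rw [braidDelta_eq_partial, this, if_pos (by omega)]

lemma invCount_delta (n : ℕ) :
    (invCount (braidPerm n (braidDelta n)) : ℤ)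
      = (Finset.range n).sum (fun i => (i:ℤ)) := by
  classical
  have hfilter : (Finset.univ.filter fun p : Fin n × Fin n =>
      p.1 < p.2 ∧ (braidPerm n (braidDelta n)) p.2 < (braidPerm n (braidDelta n)) p.1)
      = Finset.univ.filter fun p : Fin n × Fin n => p.1 < p.2 := by
    apply Finset.filter_congr
    intro p _
    constructor
    · exact fun h => h.1
    · intro h
      refine ⟨h, ?_⟩
      show ((braidPerm n (braidDelta n)) p.2).val < ((braidPerm n (braidDelta n)) p.1).val
      rw [delta_act, delta_act]
      have h1 : p.1.val < p.2.val := h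
      have h2 := p.2.isLt
      omega
  have hcard : (Finset.univ.filter fun p : Fin n × Fin n => p.1 < p.2).card
      = (Finset.range n).sum (fun i => i) := by
    rw [Finset.card_eq_sum_card_fiberwise
      (f := Prod.snd) (t := Finset.univ) (fun x _ => Finset.mem_univ _)]
    have hfib : ∀ b : Fin n,
        ((Finset.univ.filter fun p : Fin n × Fin n => p.1 < p.2).filter
          fun p => p.snd = b) = (Finset.Iio b) ×ˢ ({b} : Finset (Fin n)) := by
      intro b
      ext ⟨u, v⟩
      simp only [Finset.mem_filter, Finset.mem_univ, true_and, Finset.mem_product,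
        Finset.mem_Iio, Finset.mem_singleton]
      constructor
      · rintro ⟨h1, h2⟩; exact ⟨h2 ▸ h1, h2⟩
      · rintro ⟨h1, h2⟩; exact ⟨h2 ▸ h1, h2⟩
    calc (∑ b : Fin n, ((Finset.univ.filter fun p : Fin n × Fin n => p.1 < p.2).filter
            fun p => p.snd = b).card)
        = ∑ b : Fin n, (b : ℕ) := by
          apply Finset.sum_congr rfl
          intro b _
          rw [hfib b, Finset.card_product, Fin.card_Iio, Finset.card_singleton, mul_one]
      _ = (Finset.range n).sum (fun i => i) := Fin.sum_univ_eq_sum_range (fun i => i) n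
  rw [invCount, hfilter, hcard]
  push_cast
  rfl

/-- key braid fact: `σ_i^2` does not left-divide `Δ`. -/
lemma braid_sq_not_ldvd (n : ℕ) {i : ℕ} (h1 : 1 ≤ i) (h2 : i ≤ n - 1) :
    (braidGen n i * braidGen n i)⁻¹ * braidDelta n ∉ braidMonoid n := by
  intro hmem
  have hD : braidGen n i * braidGen n i * ((braidGen n i * braidGen n i)⁻¹ * braidDelta n)
      = braidDelta n := by group
  have hperm : braidPerm n ((braidGen n i * braidGen n i)⁻¹ * braidDelta n)
      = braidPerm n (braidDelta n) := by
    have hmap := congrArg (braidPerm n) hD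
    rw [map_mul, map_mul, braidPerm_gen h1 h2, Equiv.swap_mul_self, one_mul] at hmap
    exact hmap
  have hez : eZ ((braidGen n i * braidGen n i)⁻¹ * braidDelta n)
      = eZ (braidDelta n) - 2 := by
    have hmap := congrArg eZ hD
    rw [eZ_mul, eZ_mul, eZ_gen h1 h2] at hmap
    omega
  have hb := invCount_le_eZ hmem
  rw [hperm, hez, invCount_delta n, eZ_delta n (by omega)] at hb
  omega

end AuxDelta

section AuxCore

namespace GarsideGroup

variable {G : Type*} [Group G]

lemma aux_tau_atom (g : GarsideGroup G) {a : G} (ha : g.Atom a) :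
    g.Atom (g.Δ⁻¹ * a * g.Δ) := by
  obtain ⟨haP, ha1, hsplit⟩ := ha
  refine ⟨g.aux_tau_mem haP, ?_, ?_⟩
  · intro h
    apply ha1
    have e : a = g.Δ * (g.Δ⁻¹ * a * g.Δ) * g.Δ⁻¹ := by group
    rw [e, h]; group
  · intro u v hu hv huv
    have ha2 : a = (g.Δ * u * g.Δ⁻¹) * (g.Δ * v * g.Δ⁻¹) := by
      have e : a = g.Δ * (g.Δ⁻¹ * a * g.Δ) * g.Δ⁻¹ := by group
      rw [e, huv]; group
    rcases hsplit _ _ (g.aux_tauinv_mem hu) (g.aux_tauinv_mem hv) ha2 with h | h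
    · left
      have e : u = g.Δ⁻¹ * (g.Δ * u * g.Δ⁻¹) * g.Δ := by group
      rw [e, h]; group
    · right
      have e : v = g.Δ⁻¹ * (g.Δ * v * g.Δ⁻¹) * g.Δ := by group
      rw [e, h]; group

lemma aux_exists_simple (g : GarsideGroup G) {p : G} (hp : p ∈ g.P) :
    p = 1 ∨ ∃ s, g.Simple s ∧ s ≠ 1 ∧ g.LDvd s p := by
  have hPle : Submonoid.closure {s : G | s ∈ g.P ∧ s⁻¹ * g.Δ ∈ g.P} ≤ g.P :=
    Submonoid.closure_le.mpr (fun t ht => ht.1)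
  have hcl := g.simples_generate p hp
  clear hp
  induction hcl using Submonoid.closure_induction with
  | mem q hq =>
      by_cases hq1 : q = 1
      · left; exact hq1
      · right; exact ⟨q, ⟨hq.1, hq.2⟩, hq1, g.aux_ldvd_refl q⟩
  | one => left; rfl
  | mul u v hu hv ihu ihv =>
      rcases ihu with rfl | ⟨s, hsS, hs1, hsu⟩
      · rcases ihv with rfl | ⟨s, hsS, hs1, hsv⟩
        · left; rw [one_mul]
        · right; exact ⟨s, hsS, hs1, by rw [one_mul]; exact hsv⟩
      · right
        exact ⟨s, hsS, hs1, g.aux_ldvd_mul_right hsu (hPle hv)⟩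

theorem garside_core (g : GarsideGroup G) (L : List G) (σ a : G) (j : ℕ)
    (hL : g.IsLNF L) (hr2 : 2 ≤ L.length)
    (hfirst : L.head? = some σ) (hlast : L.getLast? = some σ)
    (hσatom : g.Atom σ) (hK1 : ¬ g.LDvd (σ * σ) g.Δ) (hσinv : σ⁻¹ ∉ g.P)
    (hj : j < L.length) (hj1 : 1 ≤ j) (hj2 : j + 1 < L.length)
    (ha : g.Atom a) (hfac : L.get ⟨j, hj⟩ = a⁻¹ * g.Δ)
    (z : G) (hzΔ : ¬ g.LDvd g.Δ z)
    (lam : ℕ) (hlam0 : 1 ≤ lam) (hlam1 : g.LDvd (L.prod ^ lam) z) :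
    g.lgcd (g.Δ ^ ((lam - 1) * L.length)) z = L.prod ^ (lam - 1) := by
  classical
  -- basic facts
  have hsimple : ∀ s ∈ L, g.Simple s := fun s hs => (hL.1 s hs).1
  have hxP : L.prod ∈ g.P := Submonoid.list_prod_mem _ (fun s hs => (hsimple s hs).1)
  have hxΔr : g.LDvd L.prod (g.Δ ^ L.length) := g.aux_prod_simples_ldvd hsimple
  have hσ0 : L[0]'(by omega) = σ := by
    rw [List.head?_eq_getElem?, List.getElem?_eq_getElem (by omega : 0 < L.length)] at hfirst
    exact Option.some_injective _ hfirst
  have hσl : L[L.length - 1]'(by omega) = σ := by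
    rw [List.getLast?_eq_getElem?,
      List.getElem?_eq_getElem (by omega : L.length - 1 < L.length)] at hlast
    exact Option.some_injective _ hlast
  have hfac' : L[j]'hj = a⁻¹ * g.Δ := by
    have h2 := hfac
    rwa [List.get_eq_getElem] at h2
  have hσS : g.Simple σ := hσ0 ▸ hsimple _ (List.getElem_mem _)
  have hfS : g.Simple (a⁻¹ * g.Δ) := hfac' ▸ hsimple _ (List.getElem_mem _)
  have haP : a ∈ g.P := ha.1
  have htaAtom : g.Atom (g.Δ⁻¹ * a * g.Δ) := g.aux_tau_atom ha
  have htaP : g.Δ⁻¹ * a * g.Δ ∈ g.P := htaAtom.1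
  have hGpP : (L.take j).prod ∈ g.P :=
    Submonoid.list_prod_mem _ (fun s hs => (hsimple s (List.take_subset _ _ hs)).1)
  have hWpP : (L.drop (j+1)).prod ∈ g.P :=
    Submonoid.list_prod_mem _ (fun s hs => (hsimple s (List.drop_subset _ _ hs)).1)
  have hdropP : ∀ i : ℕ, (L.drop i).prod ∈ g.P := fun i =>
    Submonoid.list_prod_mem _ (fun s hs => (hsimple s (List.drop_subset _ _ hs)).1)
  -- hL2 in getElem form
  have hL2 : ∀ (i : ℕ) (h : i < L.length), ∀ c : G, g.LDvd c g.Δ →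
      g.LDvd c (L.drop i).prod → g.LDvd c (L[i]'h) := by
    intro i h c h1 h2
    have := hL.2 i h c h1 h2
    rwa [List.get_eq_getElem] at this
  -- the full decomposition of x
  have hxdec : L.prod = (L.take j).prod * ((a⁻¹ * g.Δ) * (L.drop (j+1)).prod) := by
    rw [← List.prod_take_mul_prod_drop L j, List.drop_eq_getElem_cons hj, List.prod_cons,
      hfac', mul_assoc]
  -- pair weightedness of (σ, σ)
  have hPwσσ : ∀ u : G, g.LDvd u g.Δ → g.LDvd u (σ * σ) → g.LDvd u σ := by
    intro u hu1 hu2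
    obtain ⟨m, hm1, hm2, hm3⟩ := g.llcm_exists σ u
    have hmσσ : g.LDvd m (σ * σ) := hm3 _ (by
      show σ⁻¹ * (σ * σ) ∈ g.P
      rw [inv_mul_cancel_left]; exact hσS.1) hu2
    have hmΔ : g.LDvd m g.Δ := hm3 _ hσS.2 hu1
    have hsP : σ⁻¹ * m ∈ g.P := hm1
    have hsσ : (σ⁻¹ * m)⁻¹ * σ ∈ g.P := by
      have e : (σ⁻¹ * m)⁻¹ * σ = m⁻¹ * (σ * σ) := by group
      rw [e]; exact hmσσ
    rcases hσatom.2.2 (σ⁻¹ * m) ((σ⁻¹ * m)⁻¹ * σ) hsP hsσ (by group) with h | h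
    · have hm : σ = m := inv_mul_eq_one.mp h
      rw [hm]; exact hm2
    · exfalso
      apply hK1
      have e1 : σ⁻¹ * m = σ := inv_mul_eq_one.mp h
      have hm : m = σ * σ := by
        have := congrArg (fun y => σ * y) e1
        simpa [mul_inv_cancel_left] using this
      rw [← hm]; exact hmΔ
  -- pair weightedness inside L
  have hPwL : ∀ (i : ℕ) (h : i + 1 < L.length), ∀ u : G, g.LDvd u g.Δ →
      g.LDvd u ((L[i]'(by omega)) * (L[i+1]'h)) → g.LDvd u (L[i]'(by omega)) := by
    intro i h u hu1 hu2
    apply hL2 i (by omega) u hu1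
    have hdec : (L.drop i).prod
        = ((L[i]'(by omega)) * (L[i+1]'h)) * (L.drop (i+2)).prod := by
      rw [List.drop_eq_getElem_cons (by omega : i < L.length), List.prod_cons,
        List.drop_eq_getElem_cons (by omega : i + 1 < L.length), List.prod_cons, mul_assoc]
    rw [aux_ldvd_def, hdec]
    have e : u⁻¹ * (((L[i]'(by omega)) * (L[i+1]'h)) * (L.drop (i+2)).prod)
        = (u⁻¹ * ((L[i]'(by omega)) * (L[i+1]'h))) * (L.drop (i+2)).prod := by group
    rw [e]
    exact g.P.mul_mem hu2 (hdropP (i+2))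
  -- the head lemmas, by mutual induction
  have hGfull : ∀ k : ℕ,
      (∀ u : G, g.LDvd u g.Δ → g.LDvd u (L.prod ^ k * σ) → g.LDvd u σ) →
      ∀ d i : ℕ, ∀ hid : i + d + 1 = L.length, ∀ u : G, g.LDvd u g.Δ →
      g.LDvd u ((L.drop i).prod * (L.prod ^ k * σ)) → g.LDvd u (L[i]'(by omega)) := by
    intro k hHk d
    induction d with
    | zero =>
        intro i hid u hu1 hu2
        have hil : L[i]'(by omega) = σ := by
          have e : i = L.length - 1 := by omega
          subst e; exact hσl
        rw [hil]
        have hdrop1 : L.drop (i+1) = [] := by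
          rw [show i + 1 = L.length from by omega]
          exact List.drop_length
        have hdp : (L.drop i).prod = σ := by
          rw [List.drop_eq_getElem_cons (by omega : i < L.length), List.prod_cons, hdrop1,
            List.prod_nil, mul_one, hil]
        rw [hdp] at hu2
        obtain ⟨m, hm1, hm2, hm3⟩ := g.llcm_exists σ u
        have hYP : L.prod ^ k * σ ∈ g.P := g.P.mul_mem (pow_mem hxP k) hσS.1
        have hmY : g.LDvd m (σ * (L.prod ^ k * σ)) := hm3 _ (by
          show σ⁻¹ * (σ * (L.prod ^ k * σ)) ∈ g.P
          rw [inv_mul_cancel_left]; exact hYP) hu2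
        have hmΔ : g.LDvd m g.Δ := hm3 _ hσS.2 hu1
        have hs' : g.LDvd (σ⁻¹ * m) (L.prod ^ k * σ) := by
          show (σ⁻¹ * m)⁻¹ * (L.prod ^ k * σ) ∈ g.P
          have e : (σ⁻¹ * m)⁻¹ * (L.prod ^ k * σ) = m⁻¹ * (σ * (L.prod ^ k * σ)) := by group
          rw [e]; exact hmY
        have hsΔ : g.LDvd (σ⁻¹ * m) g.Δ := by
          show (σ⁻¹ * m)⁻¹ * g.Δ ∈ g.P
          have e : (σ⁻¹ * m)⁻¹ * g.Δ = (m⁻¹ * g.Δ) * (g.Δ⁻¹ * σ * g.Δ) := by group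
          rw [e]
          exact g.P.mul_mem hmΔ (g.aux_tau_mem hσS.1)
        have hss : g.LDvd (σ⁻¹ * m) σ := hHk _ hsΔ hs'
        have hmσσ : g.LDvd m (σ * σ) := by
          show m⁻¹ * (σ * σ) ∈ g.P
          have e : m⁻¹ * (σ * σ) = (σ⁻¹ * m)⁻¹ * σ := by group
          rw [e]; exact hss
        exact g.aux_ldvd_trans hm2 (hPwσσ m hmΔ hmσσ)
    | succ d ihd =>
        intro i hid u hu1 hu2
        obtain ⟨m, hm1, hm2, hm3⟩ := g.llcm_exists (L[i]'(by omega)) u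
        have hiS : g.Simple (L[i]'(by omega)) := hsimple _ (List.getElem_mem _)
        have hYP : (L.drop (i+1)).prod * (L.prod ^ k * σ) ∈ g.P :=
          g.P.mul_mem (hdropP (i+1)) (g.P.mul_mem (pow_mem hxP k) hσS.1)
        have hdec : (L.drop i).prod * (L.prod ^ k * σ)
            = (L[i]'(by omega)) * ((L.drop (i+1)).prod * (L.prod ^ k * σ)) := by
          rw [List.drop_eq_getElem_cons (by omega : i < L.length), List.prod_cons, mul_assoc]
        rw [hdec] at hu2
        have hmY : g.LDvd m ((L[i]'(by omega)) * ((L.drop (i+1)).prod * (L.prod ^ k * σ))) :=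
          hm3 _ (by
            show (L[i]'(by omega))⁻¹ * ((L[i]'(by omega)) * ((L.drop (i+1)).prod * (L.prod ^ k * σ))) ∈ g.P
            rw [inv_mul_cancel_left]; exact hYP) hu2
        have hmΔ : g.LDvd m g.Δ := hm3 _ hiS.2 hu1
        have hs' : g.LDvd ((L[i]'(by omega))⁻¹ * m) ((L.drop (i+1)).prod * (L.prod ^ k * σ)) := by
          show ((L[i]'(by omega))⁻¹ * m)⁻¹ * ((L.drop (i+1)).prod * (L.prod ^ k * σ)) ∈ g.P
          have e : ((L[i]'(by omega))⁻¹ * m)⁻¹ * ((L.drop (i+1)).prod * (L.prod ^ k * σ))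
              = m⁻¹ * ((L[i]'(by omega)) * ((L.drop (i+1)).prod * (L.prod ^ k * σ))) := by group
          rw [e]; exact hmY
        have hsΔ : g.LDvd ((L[i]'(by omega))⁻¹ * m) g.Δ := by
          show ((L[i]'(by omega))⁻¹ * m)⁻¹ * g.Δ ∈ g.P
          have e : ((L[i]'(by omega))⁻¹ * m)⁻¹ * g.Δ
              = (m⁻¹ * g.Δ) * (g.Δ⁻¹ * (L[i]'(by omega)) * g.Δ) := by group
          rw [e]
          exact g.P.mul_mem hmΔ (g.aux_tau_mem hiS.1)
        have hss : g.LDvd ((L[i]'(by omega))⁻¹ * m) (L[i+1]'(by omega)) :=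
          ihd (i+1) (by omega) _ hsΔ hs'
        have hmpair : g.LDvd m ((L[i]'(by omega)) * (L[i+1]'(by omega))) := by
          show m⁻¹ * ((L[i]'(by omega)) * (L[i+1]'(by omega))) ∈ g.P
          have e : m⁻¹ * ((L[i]'(by omega)) * (L[i+1]'(by omega)))
              = ((L[i]'(by omega))⁻¹ * m)⁻¹ * (L[i+1]'(by omega)) := by group
          rw [e]; exact hss
        exact g.aux_ldvd_trans hm2 (hPwL i (by omega) m hmΔ hmpair)
  have hHG : ∀ k : ℕ, ∀ u : G, g.LDvd u g.Δ → g.LDvd u (L.prod ^ k * σ) → g.LDvd u σ := by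
    intro k
    induction k with
    | zero =>
        intro u hu1 hu2
        simpa using hu2
    | succ k ih =>
        intro u hu1 hu2
        have e : L.prod ^ (k+1) * σ = (L.drop 0).prod * (L.prod ^ k * σ) := by
          rw [List.drop_zero, pow_succ', mul_assoc]
        rw [e] at hu2
        have := hGfull k ih (L.length - 1) 0 (by omega) u hu1 hu2
        rwa [hσ0] at this
  -- nondegeneracy: x^k σ is not ≼ Δ^(k·len)
  have hPhi : ∀ k : ℕ, ¬ g.LDvd (L.prod ^ k * σ) (g.Δ ^ (k * L.length)) := by
    intro k
    induction k with
    | zero =>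
        intro hcon
        apply hσinv
        have : (L.prod ^ 0 * σ)⁻¹ * g.Δ ^ (0 * L.length) ∈ g.P := hcon
        simpa using this
    | succ k ih =>
        intro hcon
        have hbig : L.length ≤ (k+1) * L.length :=
          Nat.le_mul_of_pos_left _ (Nat.succ_pos k)
        have hpeel : ∀ i : ℕ, i ≤ L.length →
            g.LDvd ((L.drop i).prod * (L.prod ^ k * σ)) (g.Δ ^ ((k+1) * L.length - i)) := by
          intro i
          induction i with
          | zero =>
              intro _
              have e : (L.drop 0).prod * (L.prod ^ k * σ) = L.prod ^ (k+1) * σ := by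
                rw [List.drop_zero, pow_succ', mul_assoc]
              rw [e, Nat.sub_zero]
              exact hcon
          | succ i ihi =>
              intro hi1
              have hprev := ihi (by omega)
              have hvP : (L.drop i).prod * (L.prod ^ k * σ) ∈ g.P :=
                g.P.mul_mem (hdropP i) (g.P.mul_mem (pow_mem hxP k) hσS.1)
              have hexp : (k+1) * L.length - i = ((k+1) * L.length - (i+1)) + 1 := by omega
              rw [hexp] at hprev
              have hγ := g.aux_gamma _ hvP hprev
              have hu0Δ : g.LDvd (g.lgcd g.Δ ((L.drop i).prod * (L.prod ^ k * σ))) g.Δ :=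
                g.aux_lgcd_ldvd_left _ _
              have hu0v : g.LDvd (g.lgcd g.Δ ((L.drop i).prod * (L.prod ^ k * σ)))
                  ((L.drop i).prod * (L.prod ^ k * σ)) := g.aux_lgcd_ldvd_right _ _
              have hhead : g.LDvd (g.lgcd g.Δ ((L.drop i).prod * (L.prod ^ k * σ)))
                  (L[i]'(by omega)) :=
                hGfull k (hHG k) (L.length - 1 - i) i (by omega) _ hu0Δ hu0v
              have h2 : g.LDvd ((L.drop i).prod * (L.prod ^ k * σ))
                  ((L[i]'(by omega)) * g.Δ ^ ((k+1) * L.length - (i+1))) :=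
                g.aux_ldvd_trans hγ (g.aux_ldvd_mul_deltapow _ hhead)
              have hdec : (L.drop i).prod * (L.prod ^ k * σ)
                  = (L[i]'(by omega)) * ((L.drop (i+1)).prod * (L.prod ^ k * σ)) := by
                rw [List.drop_eq_getElem_cons (by omega : i < L.length), List.prod_cons,
                  mul_assoc]
              rw [hdec] at h2
              exact g.aux_ldvd_cancel_left _ h2
        have hlast' := hpeel L.length (le_refl _)
        rw [List.drop_length, List.prod_nil, one_mul] at hlast'
        have hexp2 : (k+1) * L.length - L.length = k * L.length := by
          rw [Nat.succ_mul]; omega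
        rw [hexp2] at hlast'
        exact ih hlast'
  -- ===== main argument =====
  have hD1 : g.LDvd (L.prod ^ (lam-1)) (g.Δ ^ ((lam-1) * L.length)) :=
    g.aux_pow_ldvd_deltapow hxΔr (lam-1)
  have hpowe : L.prod ^ (lam-1) * L.prod = L.prod ^ lam := by
    rw [← pow_succ]; congr 1; omega
  have hxlam : g.LDvd (L.prod ^ (lam-1)) (L.prod ^ lam) := by
    show (L.prod ^ (lam-1))⁻¹ * L.prod ^ lam ∈ g.P
    rw [← hpowe, inv_mul_cancel_left]
    exact hxP
  have hDz : g.LDvd (L.prod ^ (lam-1)) z := g.aux_ldvd_trans hxlam hlam1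
  have hDd : g.LDvd (L.prod ^ (lam-1)) (g.lgcd (g.Δ ^ ((lam-1) * L.length)) z) :=
    g.aux_ldvd_lgcd hD1 hDz
  have hcP : (L.prod ^ (lam-1))⁻¹ * g.lgcd (g.Δ ^ ((lam-1) * L.length)) z ∈ g.P := hDd
  suffices hc1 : (L.prod ^ (lam-1))⁻¹ * g.lgcd (g.Δ ^ ((lam-1) * L.length)) z = 1 by
    have := congrArg (fun y => L.prod ^ (lam-1) * y) hc1
    simpa [mul_inv_cancel_left] using this
  by_contra hc1
  rcases g.aux_exists_simple hcP with h1 | ⟨s, hsS, hs1, hsc⟩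
  · exact hc1 h1
  -- x^{lam-1} * s divides both Δ^N and z
  have hxsD : g.LDvd (L.prod ^ (lam-1) * s) (g.lgcd (g.Δ ^ ((lam-1) * L.length)) z) := by
    show (L.prod ^ (lam-1) * s)⁻¹ * g.lgcd (g.Δ ^ ((lam-1) * L.length)) z ∈ g.P
    have e : (L.prod ^ (lam-1) * s)⁻¹ * g.lgcd (g.Δ ^ ((lam-1) * L.length)) z
        = s⁻¹ * ((L.prod ^ (lam-1))⁻¹ * g.lgcd (g.Δ ^ ((lam-1) * L.length)) z) := by group
    rw [e]; exact hsc
  have hxsΔ : g.LDvd (L.prod ^ (lam-1) * s) (g.Δ ^ ((lam-1) * L.length)) :=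
    g.aux_ldvd_trans hxsD (g.aux_lgcd_ldvd_left _ _)
  have hxsz : g.LDvd (L.prod ^ (lam-1) * s) z :=
    g.aux_ldvd_trans hxsD (g.aux_lgcd_ldvd_right _ _)
  by_cases hsσ : s = σ
  · subst hsσ
    exact hPhi (lam - 1) hxsΔ
  -- main transport case
  have hsΔ : g.LDvd s g.Δ := hsS.2
  have hB2 : ¬ g.LDvd s ((L.take j).prod * (a⁻¹ * g.Δ)) := by
    intro hcon
    have hsx : g.LDvd s L.prod := by
      rw [hxdec]
      show s⁻¹ * ((L.take j).prod * ((a⁻¹ * g.Δ) * (L.drop (j+1)).prod)) ∈ g.P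
      have e : s⁻¹ * ((L.take j).prod * ((a⁻¹ * g.Δ) * (L.drop (j+1)).prod))
          = (s⁻¹ * ((L.take j).prod * (a⁻¹ * g.Δ))) * (L.drop (j+1)).prod := by group
      rw [e]
      exact g.P.mul_mem hcon hWpP
    have hs0 : g.LDvd s (L[0]'(by omega)) := by
      apply hL2 0 (by omega) s hsΔ
      rwa [List.drop_zero]
    rw [hσ0] at hs0
    rcases hσatom.2.2 s (s⁻¹ * σ) hsS.1 hs0 (by group) with h | h
    · exact hs1 h
    · apply hsσ
      have e1 : s⁻¹ * σ = 1 := h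
      have : σ = s * (s⁻¹ * σ) := by group
      rw [e1, mul_one] at this
      exact this.symm
  obtain ⟨m1, hm11, hm12, hm13⟩ := g.llcm_exists (L.take j).prod s
  have hm1GpΔ : g.LDvd m1 ((L.take j).prod * g.Δ) := by
    refine hm13 _ ?_ ?_
    · show (L.take j).prod⁻¹ * ((L.take j).prod * g.Δ) ∈ g.P
      rw [inv_mul_cancel_left]; exact g.delta_pos
    · show s⁻¹ * ((L.take j).prod * g.Δ) ∈ g.P
      have e : s⁻¹ * ((L.take j).prod * g.Δ)
          = (s⁻¹ * g.Δ) * (g.Δ⁻¹ * (L.take j).prod * g.Δ) := by group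
      rw [e]
      exact g.P.mul_mem hsΔ (g.aux_tau_mem hGpP)
  have ht1Δ : g.LDvd ((L.take j).prod⁻¹ * m1) g.Δ := by
    show ((L.take j).prod⁻¹ * m1)⁻¹ * g.Δ ∈ g.P
    have e : ((L.take j).prod⁻¹ * m1)⁻¹ * g.Δ = m1⁻¹ * ((L.take j).prod * g.Δ) := by group
    rw [e]; exact hm1GpΔ
  have hB4 : ¬ g.LDvd ((L.take j).prod⁻¹ * m1) (a⁻¹ * g.Δ) := by
    intro hcon
    apply hB2
    refine g.aux_ldvd_trans hm12 ?_
    show m1⁻¹ * ((L.take j).prod * (a⁻¹ * g.Δ)) ∈ g.P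
    have e : m1⁻¹ * ((L.take j).prod * (a⁻¹ * g.Δ))
        = (((L.take j).prod⁻¹ * m1)⁻¹) * (a⁻¹ * g.Δ) := by group
    rw [e]; exact hcon
  obtain ⟨u1, hu11, hu12, hu13⟩ := g.llcm_exists (a⁻¹ * g.Δ) ((L.take j).prod⁻¹ * m1)
  have hfdivΔ : g.LDvd (a⁻¹ * g.Δ) g.Δ := by
    show (a⁻¹ * g.Δ)⁻¹ * g.Δ ∈ g.P
    have e : (a⁻¹ * g.Δ)⁻¹ * g.Δ = g.Δ⁻¹ * a * g.Δ := by group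
    rw [e]; exact htaP
  have hu1Δ : g.LDvd u1 g.Δ := hu13 _ hfdivΔ ht1Δ
  have hu1eq : u1 = g.Δ := by
    have hvP : (a⁻¹ * g.Δ)⁻¹ * u1 ∈ g.P := hu11
    have hvta : ((a⁻¹ * g.Δ)⁻¹ * u1)⁻¹ * (g.Δ⁻¹ * a * g.Δ) ∈ g.P := by
      have e : ((a⁻¹ * g.Δ)⁻¹ * u1)⁻¹ * (g.Δ⁻¹ * a * g.Δ) = u1⁻¹ * g.Δ := by group
      rw [e]; exact hu1Δ
    rcases htaAtom.2.2 _ _ hvP hvta (by group) with h | h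
    · exfalso
      apply hB4
      have hu1f : u1 = a⁻¹ * g.Δ := (inv_mul_eq_one.mp h).symm
      rw [← hu1f]; exact hu12
    · have e1 : (a⁻¹ * g.Δ)⁻¹ * u1 = g.Δ⁻¹ * a * g.Δ := inv_mul_eq_one.mp h
      have := congrArg (fun y => (a⁻¹ * g.Δ) * y) e1
      simp only [mul_inv_cancel_left] at this
      rw [this]; group
  obtain ⟨M2, hM21, hM22, hM23⟩ := g.llcm_exists (L.drop (j+1)).prod (g.Δ⁻¹ * a * g.Δ)
  -- s divides XB := Gp * (a⁻¹Δ) * M2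
  have ht1u1 : g.LDvd ((L.take j).prod⁻¹ * m1) g.Δ := by
    rw [← hu1eq]; exact hu12
  have hB6a : g.LDvd s ((L.take j).prod * (a⁻¹ * g.Δ) * M2) := by
    refine g.aux_ldvd_trans hm12 ?_
    show m1⁻¹ * ((L.take j).prod * (a⁻¹ * g.Δ) * M2) ∈ g.P
    have e : m1⁻¹ * ((L.take j).prod * (a⁻¹ * g.Δ) * M2)
        = ((((L.take j).prod⁻¹ * m1))⁻¹ * g.Δ) * ((g.Δ⁻¹ * a * g.Δ)⁻¹ * M2) := by group
    rw [e]
    exact g.P.mul_mem ht1u1 hM22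
  -- XB ≼ (x^{lam-1})⁻¹ z
  have hT1 : g.LDvd s ((L.prod ^ (lam-1))⁻¹ * z) := by
    show s⁻¹ * ((L.prod ^ (lam-1))⁻¹ * z) ∈ g.P
    have e : s⁻¹ * ((L.prod ^ (lam-1))⁻¹ * z) = (L.prod ^ (lam-1) * s)⁻¹ * z := by group
    rw [e]; exact hxsz
  have hT2 : g.LDvd L.prod ((L.prod ^ (lam-1))⁻¹ * z) := by
    show L.prod⁻¹ * ((L.prod ^ (lam-1))⁻¹ * z) ∈ g.P
    have e : L.prod⁻¹ * ((L.prod ^ (lam-1))⁻¹ * z)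
        = (L.prod ^ (lam-1) * L.prod)⁻¹ * z := by group
    rw [e, hpowe]; exact hlam1
  have hGpT : g.LDvd (L.take j).prod ((L.prod ^ (lam-1))⁻¹ * z) := by
    refine g.aux_ldvd_trans ?_ hT2
    show (L.take j).prod⁻¹ * L.prod ∈ g.P
    rw [hxdec, inv_mul_cancel_left]
    exact g.P.mul_mem hfS.1 hWpP
  have hm1T : g.LDvd m1 ((L.prod ^ (lam-1))⁻¹ * z) := hm13 _ hGpT hT1
  have hfT : g.LDvd (a⁻¹ * g.Δ) ((L.take j).prod⁻¹ * ((L.prod ^ (lam-1))⁻¹ * z)) := by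
    show (a⁻¹ * g.Δ)⁻¹ * ((L.take j).prod⁻¹ * ((L.prod ^ (lam-1))⁻¹ * z)) ∈ g.P
    have e : (a⁻¹ * g.Δ)⁻¹ * ((L.take j).prod⁻¹ * ((L.prod ^ (lam-1))⁻¹ * z))
        = (L.drop (j+1)).prod *
          ((((L.take j).prod * ((a⁻¹ * g.Δ) * (L.drop (j+1)).prod)))⁻¹ *
            ((L.prod ^ (lam-1))⁻¹ * z)) := by group
    rw [e, ← hxdec]
    exact g.P.mul_mem hWpP hT2
  have ht1T : g.LDvd ((L.take j).prod⁻¹ * m1)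
      ((L.take j).prod⁻¹ * ((L.prod ^ (lam-1))⁻¹ * z)) := by
    show ((L.take j).prod⁻¹ * m1)⁻¹ * ((L.take j).prod⁻¹ * ((L.prod ^ (lam-1))⁻¹ * z)) ∈ g.P
    have e : ((L.take j).prod⁻¹ * m1)⁻¹ * ((L.take j).prod⁻¹ * ((L.prod ^ (lam-1))⁻¹ * z))
        = m1⁻¹ * ((L.prod ^ (lam-1))⁻¹ * z) := by group
    rw [e]; exact hm1T
  have hΔT1 : g.LDvd g.Δ ((L.take j).prod⁻¹ * ((L.prod ^ (lam-1))⁻¹ * z)) := by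
    rw [← hu1eq]
    exact hu13 _ hfT ht1T
  have hM2T : g.LDvd M2
      ((a⁻¹ * g.Δ)⁻¹ * ((L.take j).prod⁻¹ * ((L.prod ^ (lam-1))⁻¹ * z))) := by
    refine hM23 _ ?_ ?_
    · show (L.drop (j+1)).prod⁻¹ *
        ((a⁻¹ * g.Δ)⁻¹ * ((L.take j).prod⁻¹ * ((L.prod ^ (lam-1))⁻¹ * z))) ∈ g.P
      have e : (L.drop (j+1)).prod⁻¹ *
          ((a⁻¹ * g.Δ)⁻¹ * ((L.take j).prod⁻¹ * ((L.prod ^ (lam-1))⁻¹ * z)))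
          = ((L.take j).prod * ((a⁻¹ * g.Δ) * (L.drop (j+1)).prod))⁻¹ *
            ((L.prod ^ (lam-1))⁻¹ * z) := by group
      rw [e, ← hxdec]
      exact hT2
    · show (g.Δ⁻¹ * a * g.Δ)⁻¹ *
        ((a⁻¹ * g.Δ)⁻¹ * ((L.take j).prod⁻¹ * ((L.prod ^ (lam-1))⁻¹ * z))) ∈ g.P
      have e : (g.Δ⁻¹ * a * g.Δ)⁻¹ *
          ((a⁻¹ * g.Δ)⁻¹ * ((L.take j).prod⁻¹ * ((L.prod ^ (lam-1))⁻¹ * z)))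
          = g.Δ⁻¹ * ((L.take j).prod⁻¹ * ((L.prod ^ (lam-1))⁻¹ * z)) := by group
      rw [e]
      exact hΔT1
  have hXBT : g.LDvd ((L.take j).prod * (a⁻¹ * g.Δ) * M2) ((L.prod ^ (lam-1))⁻¹ * z) := by
    show ((L.take j).prod * (a⁻¹ * g.Δ) * M2)⁻¹ * ((L.prod ^ (lam-1))⁻¹ * z) ∈ g.P
    have e : ((L.take j).prod * (a⁻¹ * g.Δ) * M2)⁻¹ * ((L.prod ^ (lam-1))⁻¹ * z)
        = M2⁻¹ * ((a⁻¹ * g.Δ)⁻¹ * ((L.take j).prod⁻¹ * ((L.prod ^ (lam-1))⁻¹ * z))) := by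
      group
    rw [e]; exact hM2T
  have hΔXB : g.LDvd g.Δ ((L.take j).prod * (a⁻¹ * g.Δ) * M2) := by
    show g.Δ⁻¹ * ((L.take j).prod * (a⁻¹ * g.Δ) * M2) ∈ g.P
    have e : g.Δ⁻¹ * ((L.take j).prod * (a⁻¹ * g.Δ) * M2)
        = (g.Δ⁻¹ * (L.take j).prod * g.Δ) * ((g.Δ⁻¹ * a * g.Δ)⁻¹ * M2) := by group
    rw [e]
    exact g.P.mul_mem (g.aux_tau_mem hGpP) hM22
  apply hzΔ
  have h1 : g.LDvd g.Δ (L.prod ^ (lam-1) * ((L.take j).prod * (a⁻¹ * g.Δ) * M2)) := by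
    show g.Δ⁻¹ * (L.prod ^ (lam-1) * ((L.take j).prod * (a⁻¹ * g.Δ) * M2)) ∈ g.P
    have e : g.Δ⁻¹ * (L.prod ^ (lam-1) * ((L.take j).prod * (a⁻¹ * g.Δ) * M2))
        = (g.Δ⁻¹ * L.prod ^ (lam-1) * g.Δ) *
          (g.Δ⁻¹ * ((L.take j).prod * (a⁻¹ * g.Δ) * M2)) := by group
    rw [e]
    exact g.P.mul_mem (g.aux_tau_mem (pow_mem hxP (lam-1))) hΔXB
  have h2 : g.LDvd (L.prod ^ (lam-1) * ((L.take j).prod * (a⁻¹ * g.Δ) * M2)) z := by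
    show (L.prod ^ (lam-1) * ((L.take j).prod * (a⁻¹ * g.Δ) * M2))⁻¹ * z ∈ g.P
    have e : (L.prod ^ (lam-1) * ((L.take j).prod * (a⁻¹ * g.Δ) * M2))⁻¹ * z
        = ((L.take j).prod * (a⁻¹ * g.Δ) * M2)⁻¹ * ((L.prod ^ (lam-1))⁻¹ * z) := by group
    rw [e]; exact hXBT
  exact g.aux_ldvd_trans h1 h2

end GarsideGroup

end AuxCore


/-- Proposition 3.11: let `x ∈ B_n⁺` (`n ≥ 4`) have `inf x = 0`, with
left normal form `L` (length `r ≥ 2`) coinciding with its right normal form, first and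
last factors the atom `σ_⌊(n+1)/2⌋`, and some interior factor of the form `a⁻¹Δ` for an
atom `a`.  If `z` has infimum `0` and `lam = λ_x(z) ≥ 2`, then the product of the first
`(lam-1)·r` factors of the left normal form of `z` is exactly `x^{lam-1}`, i.e.
`Δ^{(lam-1)·r} ∧ z = x^{lam-1}`. -/
theorem BraidGroup.initial_segment_power {n : ℕ} (hn : 4 ≤ n)
    (g : GarsideGroup (BraidGroup n)) (hg : IsClassicalBraidStructure g)
    (x : BraidGroup n) (hxP : x ∈ g.P) (hxinf : g.ginf x = 0)
    (L : List (BraidGroup n)) (hL : g.IsLNF L) (hLr : g.IsRNF L) (hLx : L.prod = x)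
    (hlen : 2 ≤ L.length)
    (hfirst : L.head? = some (braidGen n ((n + 1) / 2)))
    (hlast : L.getLast? = some (braidGen n ((n + 1) / 2)))
    (hfac : ∃ (j : ℕ) (hj : j < L.length), 1 ≤ j ∧ j + 1 < L.length ∧
      ∃ a : BraidGroup n, g.Atom a ∧ L.get ⟨j, hj⟩ = a⁻¹ * g.Δ)
    (z : BraidGroup n) (hzinf : g.ginf z = 0)
    (lam : ℕ) (hlam0 : 2 ≤ lam) (hlam1 : g.LDvd (x ^ lam) z)
    (hlam2 : ∀ k : ℤ, g.LDvd (x ^ k) z → k ≤ (lam : ℤ)) :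
    g.lgcd (g.Δ ^ ((lam - 1) * L.length)) z = x ^ (lam - 1) := by
  obtain ⟨j, hj, hj1, hj2, a, haAtom, hfacEq⟩ := hfac
  have hm1 : 1 ≤ (n+1)/2 := by omega
  have hm2 : (n+1)/2 ≤ n - 1 := by omega
  have hσP : braidGen n ((n+1)/2) ∈ g.P := by
    rw [hg.1]
    exact Submonoid.subset_closure ⟨(n+1)/2, hm1, hm2, rfl⟩
  have hσatom : g.Atom (braidGen n ((n+1)/2)) := by
    refine ⟨hσP, ?_, ?_⟩
    · intro h
      have h2 := eZ_gen (n := n) hm1 hm2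
      rw [h, eZ_one] at h2
      norm_num at h2
    · intro u v hu hv huv
      rw [hg.1] at hu hv
      have h1 : eZ u + eZ v = 1 := by
        have h3 := congrArg eZ huv
        rw [eZ_gen hm1 hm2, eZ_mul] at h3
        omega
      have h2 := eZ_nonneg hu
      have h3 := eZ_nonneg hv
      by_cases h4 : eZ u = 0
      · left; exact eZ_eq_zero_iff hu h4
      · right; exact eZ_eq_zero_iff hv (by omega)
  have hK1 : ¬ g.LDvd (braidGen n ((n+1)/2) * braidGen n ((n+1)/2)) g.Δ := by
    intro h
    have h' : (braidGen n ((n+1)/2) * braidGen n ((n+1)/2))⁻¹ * braidDelta n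
        ∈ braidMonoid n := by
      rw [← hg.2, ← hg.1]
      exact h
    exact braid_sq_not_ldvd n hm1 hm2 h'
  have hσinv : (braidGen n ((n+1)/2))⁻¹ ∉ g.P := by
    intro h
    rw [hg.1] at h
    have h2 := eZ_nonneg h
    rw [eZ_inv, eZ_gen hm1 hm2] at h2
    omega
  have hzΔ : ¬ g.LDvd g.Δ z := by
    intro h
    have h1 : (g.Δ ^ (1:ℤ))⁻¹ * z ∈ g.P := by rw [zpow_one]; exact h
    have h2 := g.ginf_max z 1 h1
    rw [hzinf] at h2
    omega
  have hcore := g.garside_core L (braidGen n ((n+1)/2)) a j hL hlen hfirst hlast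
    hσatom hK1 hσinv hj hj1 hj2 haAtom hfacEq z hzΔ lam (by omega)
    (by rw [hLx]; exact hlam1)
  rw [hLx] at hcore
  exact hcore
end
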